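/- arXiv:2509.11858 — 13 statements merged into one kernel-verified Lean document; each statement's English description precedes it below -/
import Mathlib

section
/- In the standing combinatorial setup, one has w_0(ℓ) ≥ 0 for every ℓ ∈ ℕ^r if and only if |m| ≤ 2. (Since w_0(0) = 0, this says the minimum of w_0 equals 0 exactly when the total multiplicity is at most 2; it is the combinatorial content of the characterization of A_n germs by min w_0 = 0.) -/
/-- `w₀(ℓ) ≥ 0` for every `ℓ ∈ ℕ^r` iff the total multiplicity
`|m| = m₁ + ⋯ + m_r` is at most 2. -/
theorem weight_nonneg_iff_mult_le_two
    (r : ℕ) (hr : 1 ≤ r)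
    (S : AddSubmonoid (Fin r → ℕ))
    (h : (Fin r → ℕ) → ℕ)
    (h0 : h 0 = 0)
    (hstep_pos : ∀ (ℓ : Fin r → ℕ) (i : Fin r),
      (∃ s ∈ S, s i = ℓ i ∧ ∀ j, j ≠ i → ℓ j ≤ s j) →
        h (ℓ + Pi.single i 1) = h ℓ + 1)
    (hstep_neg : ∀ (ℓ : Fin r → ℕ) (i : Fin r),
      ¬ (∃ s ∈ S, s i = ℓ i ∧ ∀ j, j ≠ i → ℓ j ≤ s j) →
        h (ℓ + Pi.single i 1) = h ℓ)
    (w0 : (Fin r → ℕ) → ℤ)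
    (hw0 : ∀ ℓ, w0 ℓ = 2 * (h ℓ : ℤ) - ∑ i, (ℓ i : ℤ))
    (m : Fin r → ℕ) (hm : ∀ i, 1 ≤ m i) (hmS : m ∈ S)
    (hSm : ∀ s ∈ S, s ≠ 0 → m ≤ s) :
    (∀ ℓ, (0 : ℤ) ≤ w0 ℓ) ↔ (∑ i, m i) ≤ 2 := by
  -- monotonicity of h
  have hmono : ∀ (ℓ : Fin r → ℕ) (i : Fin r), h ℓ ≤ h (ℓ + Pi.single i 1) := by
    intro ℓ i
    by_cases hc : ∃ s ∈ S, s i = ℓ i ∧ ∀ j, j ≠ i → ℓ j ≤ s j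
    · rw [hstep_pos ℓ i hc]; omega
    · rw [hstep_neg ℓ i hc]
  -- decomposition helper
  have hdec : ∀ (ℓ : Fin r → ℕ) (i : Fin r), 1 ≤ ℓ i →
      ℓ = Function.update ℓ i (ℓ i - 1) + Pi.single i 1 := by
    intro ℓ i hi
    funext j
    by_cases hj : j = i
    · subst hj; simp; omega
    · simp [Function.update_of_ne hj, Pi.single_eq_of_ne hj]
  have hsum : ∀ (ℓ : Fin r → ℕ) (i : Fin r), 1 ≤ ℓ i →
      (∑ j, Function.update ℓ i (ℓ i - 1) j) + 1 = ∑ j, ℓ j := by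
    intro ℓ i hi
    rw [Finset.sum_update_of_mem (Finset.mem_univ i)]
    have h1 : ∑ j, ℓ j = ℓ i + ∑ x ∈ Finset.univ \ {i}, ℓ x := by
      rw [Finset.sum_eq_add_sum_sdiff_singleton_of_mem (Finset.mem_univ i)]
    omega
  -- L1 : ℓ i ≤ m i * h ℓ
  have L1 : ∀ (n : ℕ) (ℓ : Fin r → ℕ), (∑ j, ℓ j) = n → ∀ i, ℓ i ≤ m i * h ℓ := by
    intro n
    induction n using Nat.strong_induction_on with
    | _ n IH =>
      intro ℓ hn i
      by_cases hi0 : ℓ i = 0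
      · simp [hi0]
      by_cases hj : ∃ j, j ≠ i ∧ 1 ≤ ℓ j
      · obtain ⟨j, hji, hj1⟩ := hj
        set ℓ' := Function.update ℓ j (ℓ j - 1) with hℓ'
        have hd := hdec ℓ j hj1
        have hs := hsum ℓ j hj1
        rw [← hℓ'] at hd hs
        have hlt : ∑ k, ℓ' k < n := by omega
        have hIH := IH _ hlt ℓ' rfl i
        have hmon := hmono ℓ' j
        rw [← hd] at hmon
        have hℓ'i : ℓ' i = ℓ i := by
          rw [hℓ', Function.update_of_ne (fun hc => hji hc.symm)]
        calc ℓ i = ℓ' i := hℓ'i.symm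
          _ ≤ m i * h ℓ' := hIH
          _ ≤ m i * h ℓ := Nat.mul_le_mul_left _ hmon
      · -- ℓ supported only at i
        push_neg at hj
        have hsupp : ∀ j, j ≠ i → ℓ j = 0 := fun j hji => by have := hj j hji; omega
        have hi1 : 1 ≤ ℓ i := by omega
        set ℓ' := Function.update ℓ i (ℓ i - 1) with hℓ'
        have hd := hdec ℓ i hi1
        have hs := hsum ℓ i hi1
        rw [← hℓ'] at hd hs
        have hlt : ∑ k, ℓ' k < n := by omega
        have IH' := IH _ hlt ℓ' rfl i
        have hℓ'i : ℓ' i = ℓ i - 1 := by rw [hℓ', Function.update_self]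
        by_cases hdvd : m i ∣ ℓ i - 1
        · obtain ⟨k, hk⟩ := hdvd
          have hsS : k • m ∈ S := S.nsmul_mem hmS k
          have hΔ : ∃ s ∈ S, s i = ℓ' i ∧ ∀ j, j ≠ i → ℓ' j ≤ s j := by
            refine ⟨k • m, hsS, ?_, ?_⟩
            · simp [hℓ'i, hk, mul_comm]
            · intro j hji
              have hz : ℓ' j = 0 := by
                rw [hℓ', Function.update_of_ne hji]
                exact hsupp j hji
              omega
          have hstep := hstep_pos ℓ' i hΔ
          rw [← hd] at hstep
          rw [hstep, Nat.mul_add, mul_one]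
          have := hm i
          rw [hℓ'i] at IH'
          omega
        · rw [hℓ'i] at IH'
          have hstrict : ℓ i ≤ m i * h ℓ' := by
            rcases Nat.lt_or_ge (ℓ i - 1) (m i * h ℓ') with hlt' | hge
            · omega
            · exfalso; exact hdvd ⟨h ℓ', by omega⟩
          have hmon := hmono ℓ' i
          rw [← hd] at hmon
          calc ℓ i ≤ m i * h ℓ' := hstrict
            _ ≤ m i * h ℓ := Nat.mul_le_mul_left _ hmon
  -- L2 : for 0 ≠ ℓ ≤ m, h ℓ = 1
  have L2 : ∀ (n : ℕ) (ℓ : Fin r → ℕ), (∑ j, ℓ j) = n → (∀ j, ℓ j ≤ m j) → ℓ ≠ 0 → h ℓ = 1 := by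
    intro n
    induction n using Nat.strong_induction_on with
    | _ n IH =>
      intro ℓ hn hle hne
      have hex : ∃ i, 1 ≤ ℓ i := by
        by_contra hc
        push_neg at hc
        exact hne (funext fun j => by
          have := hc j; simp only [Pi.zero_apply]; omega)
      obtain ⟨i, hi1⟩ := hex
      set ℓ' := Function.update ℓ i (ℓ i - 1) with hℓ'
      have hd := hdec ℓ i hi1
      have hs := hsum ℓ i hi1
      rw [← hℓ'] at hd hs
      have hℓ'i : ℓ' i = ℓ i - 1 := by rw [hℓ', Function.update_self]
      have hℓ'le : ∀ j, ℓ' j ≤ m j := by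
        intro j
        by_cases hj : j = i
        · subst hj; rw [hℓ'i]; have := hle j; omega
        · rw [hℓ', Function.update_of_ne hj]; exact hle j
      by_cases h0' : ℓ' = 0
      · have hΔ : ∃ s ∈ S, s i = ℓ' i ∧ ∀ j, j ≠ i → ℓ' j ≤ s j := by
          refine ⟨0, S.zero_mem, ?_, ?_⟩
          · rw [h0']
          · intro j _; rw [h0']
        have hstep := hstep_pos ℓ' i hΔ
        rw [← hd] at hstep
        rw [hstep, h0', h0]
      · have hΔ : ¬ ∃ s ∈ S, s i = ℓ' i ∧ ∀ j, j ≠ i → ℓ' j ≤ s j := by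
          rintro ⟨s, hsS, hsi, hsj⟩
          by_cases hs0 : s = 0
          · apply h0'
            funext j
            by_cases hj : j = i
            · subst hj
              have : s j = 0 := by rw [hs0]; rfl
              simp only [Pi.zero_apply]
              omega
            · have h1 := hsj j hj
              have h2 : s j = 0 := by rw [hs0]; rfl
              simp only [Pi.zero_apply]
              omega
          · have hms : m i ≤ s i := hSm s hsS hs0 i
            have hlim : ℓ' i < m i := by
              rw [hℓ'i]; have := hle i; have := hm i; omega
            omega
        have hstep := hstep_neg ℓ' i hΔ
        rw [← hd] at hstep
        have hlt : ∑ k, ℓ' k < n := by omega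
        rw [hstep]
        exact IH _ hlt ℓ' rfl hℓ'le h0'
  constructor
  · intro hall
    have hmne : m ≠ 0 := by
      intro hc
      have h1 := hm ⟨0, hr⟩
      rw [hc] at h1
      simp at h1
    have hhm : h m = 1 := L2 _ m rfl (fun j => le_refl _) hmne
    have hge := hall m
    rw [hw0 m, hhm] at hge
    have hcast : (∑ i, (m i : ℤ)) = ((∑ i, m i : ℕ) : ℤ) := by push_cast; ring
    rw [hcast] at hge
    omega
  · intro hle2 ℓ
    rw [hw0 ℓ]
    have hsumle : ∑ i, ℓ i ≤ 2 * h ℓ := by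
      calc ∑ i, ℓ i ≤ ∑ i, m i * h ℓ := Finset.sum_le_sum (fun i _ => L1 _ ℓ rfl i)
        _ = (∑ i, m i) * h ℓ := (Finset.sum_mul _ _ _).symm
        _ ≤ 2 * h ℓ := Nat.mul_le_mul_right _ hle2
    have hcast : (∑ i, (ℓ i : ℤ)) = ((∑ i, ℓ i : ℕ) : ℤ) := by push_cast; ring
    rw [hcast]
    omega
end

section
/- Let ℓ ∈ ℕ^r and 1 ≤ i ≤ r be such that w_0(ℓ + e^i) − w_0(ℓ) = 1. Then for every s ∈ S and every ℓ' ∈ ℕ^r with ℓ'_i = 0 and ℓ' ≤ s + ℓ (so that s + ℓ − ℓ' ∈ ℕ^r), one also has w_0(s + ℓ − ℓ' + e^i) − w_0(s + ℓ − ℓ') = 1. -/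
lemma sum_add_single (r : ℕ) (x : Fin r → ℕ) (i : Fin r) :
    ∑ j, (((x + Pi.single i 1 : Fin r → ℕ) j) : ℤ) = (∑ j, (x j : ℤ)) + 1 := by
  have heq : ∀ j : Fin r, (((x + Pi.single i 1 : Fin r → ℕ) j) : ℤ)
      = (x j : ℤ) + (if j = i then 1 else 0) := by
    intro j
    simp only [Pi.add_apply, Pi.single_apply, Nat.cast_add]
    split <;> simp
  rw [Finset.sum_congr rfl fun j _ => heq j, Finset.sum_add_distrib]
  simp

/-- if the weight increases from `ℓ` to `ℓ + eⁱ`, then it also increases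
from `s + ℓ - ℓ'` to `s + ℓ - ℓ' + eⁱ` for any `s ∈ S` and any `ℓ'` with `ℓ'ᵢ = 0`
and `ℓ' ≤ s + ℓ`. -/
theorem weight_increase_translate
    (r : ℕ) (hr : 1 ≤ r)
    (S : AddSubmonoid (Fin r → ℕ))
    (h : (Fin r → ℕ) → ℕ)
    (h0 : h 0 = 0)
    (hstep_pos : ∀ (ℓ : Fin r → ℕ) (i : Fin r),
      (∃ s ∈ S, s i = ℓ i ∧ ∀ j, j ≠ i → ℓ j ≤ s j) →
        h (ℓ + Pi.single i 1) = h ℓ + 1)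
    (hstep_neg : ∀ (ℓ : Fin r → ℕ) (i : Fin r),
      ¬ (∃ s ∈ S, s i = ℓ i ∧ ∀ j, j ≠ i → ℓ j ≤ s j) →
        h (ℓ + Pi.single i 1) = h ℓ)
    (w0 : (Fin r → ℕ) → ℤ)
    (hw0 : ∀ ℓ, w0 ℓ = 2 * (h ℓ : ℤ) - ∑ i, (ℓ i : ℤ))
    (ℓ : Fin r → ℕ) (i : Fin r)
    (hinc : w0 (ℓ + Pi.single i 1) - w0 ℓ = 1) :
    ∀ s ∈ S, ∀ ℓ' : Fin r → ℕ, ℓ' i = 0 → ℓ' ≤ s + ℓ →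
      w0 (s + ℓ - ℓ' + Pi.single i 1) - w0 (s + ℓ - ℓ') = 1 := by
  intro s hs ℓ' hi hle
  have hΔ : ∃ t ∈ S, t i = ℓ i ∧ ∀ j, j ≠ i → ℓ j ≤ t j := by
    by_contra hc
    have hh := hstep_neg ℓ i hc
    rw [hw0, hw0, hh, sum_add_single] at hinc
    omega
  obtain ⟨t, ht, hti, htj⟩ := hΔ
  set m := s + ℓ - ℓ' with hm
  have hΔm : ∃ u ∈ S, u i = m i ∧ ∀ j, j ≠ i → m j ≤ u j := by
    refine ⟨s + t, S.add_mem hs ht, ?_, ?_⟩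
    · have : m i = s i + ℓ i - ℓ' i := rfl
      simp [this, hi, hti]
    · intro j hj
      have h1 : m j = s j + ℓ j - ℓ' j := rfl
      have h2 : ℓ j ≤ t j := htj j hj
      have : (s + t) j = s j + t j := rfl
      simp only [h1, this]
      omega
  have hh := hstep_pos m i hΔm
  rw [hw0, hw0, hh, sum_add_single]
  push_cast
  ring
end

section
/- Suppose, in addition to the standing combinatorial setup, that |m| = 3 and w_0(2m) ≥ −1. Then w_0(ℓ) ≥ −1 for every lattice point ℓ with m ≤ ℓ ≤ 2m. -/
/-- if `|m| = 3` and `w₀(2m) ≥ -1`, then `w₀(ℓ) ≥ -1` for every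
lattice point `m ≤ ℓ ≤ 2m`. -/
theorem weight_ge_neg_one_between_m_and_two_m
    (r : ℕ) (hr : 1 ≤ r)
    (S : AddSubmonoid (Fin r → ℕ))
    (h : (Fin r → ℕ) → ℕ)
    (h0 : h 0 = 0)
    (hstep_pos : ∀ (ℓ : Fin r → ℕ) (i : Fin r),
      (∃ s ∈ S, s i = ℓ i ∧ ∀ j, j ≠ i → ℓ j ≤ s j) →
        h (ℓ + Pi.single i 1) = h ℓ + 1)
    (hstep_neg : ∀ (ℓ : Fin r → ℕ) (i : Fin r),
      ¬ (∃ s ∈ S, s i = ℓ i ∧ ∀ j, j ≠ i → ℓ j ≤ s j) →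
        h (ℓ + Pi.single i 1) = h ℓ)
    (w0 : (Fin r → ℕ) → ℤ)
    (hw0 : ∀ ℓ, w0 ℓ = 2 * (h ℓ : ℤ) - ∑ i, (ℓ i : ℤ))
    (m : Fin r → ℕ) (hm : ∀ i, 1 ≤ m i) (hmS : m ∈ S)
    (hSm : ∀ s ∈ S, s ≠ 0 → m ≤ s)
    (hm3 : (∑ i, m i) = 3)
    (h2m : (-1 : ℤ) ≤ w0 (m + m)) :
    ∀ ℓ : Fin r → ℕ, m ≤ ℓ → ℓ ≤ m + m → (-1 : ℤ) ≤ w0 ℓ := by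
  -- sum of `p + Pi.single i 1`
  have hsingle : ∀ (q : Fin r → ℕ) (i : Fin r),
      (∑ j, ((q + Pi.single i 1 : Fin r → ℕ)) j) = (∑ j, q j) + 1 := by
    intro q i
    simp [Pi.add_apply, Finset.sum_add_distrib, Pi.single_apply]
  have hsumZ : ∀ (q : Fin r → ℕ) (i : Fin r),
      (∑ j, (((q + Pi.single i 1 : Fin r → ℕ) j : ℕ) : ℤ)) = (∑ j, ((q j : ℕ) : ℤ)) + 1 := by
    intro q i
    have := hsingle q i
    push_cast [← this]
    norm_cast
  have hm3Z : (∑ i, ((m i : ℕ) : ℤ)) = 3 := by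
    exact_mod_cast congrArg (Nat.cast : ℕ → ℤ) hm3
  -- each step changes w0 by at most 1 downward
  have hstep : ∀ (p : Fin r → ℕ) (i : Fin r), w0 p - 1 ≤ w0 (p + Pi.single i 1) := by
    intro p i
    by_cases hd : ∃ s ∈ S, s i = p i ∧ ∀ j, j ≠ i → p j ≤ s j
    · rw [hw0, hw0, hstep_pos p i hd, hsumZ]
      push_cast
      linarith
    · rw [hw0, hw0, hstep_neg p i hd, hsumZ]
      linarith
  -- h = 1 below m
  have hone : ∀ n (p : Fin r → ℕ), (∑ i, p i) = n → p ≠ 0 → p ≤ m → h p = 1 := by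
    intro n
    induction n using Nat.strong_induction_on with
    | _ n ih =>
      intro p hpn hp0 hpm
      obtain ⟨i, hi⟩ : ∃ i, 1 ≤ p i := by
        by_contra hc
        push_neg at hc
        apply hp0
        funext j
        have := hc j
        simp
        omega
      set q : Fin r → ℕ := fun j => p j - (Pi.single i 1 : Fin r → ℕ) j with hq
      have hpq : p = q + Pi.single i 1 := by
        funext j
        by_cases hj : j = i <;> simp [hq, Pi.single_apply, hj] <;> omega
      have hqle : ∀ j, q j ≤ p j := by
        intro j
        simp [hq]
      by_cases hq0 : q = 0
      · rw [hpq, hq0, zero_add]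
        have : h ((0 : Fin r → ℕ) + Pi.single i 1) = h 0 + 1 := by
          refine hstep_pos 0 i ⟨0, S.zero_mem, rfl, fun j _ => le_refl _⟩
        rw [zero_add] at this
        rw [this, h0]
      · -- h p = h q by hstep_neg, then induction
        have hqi : q i = p i - 1 := by simp [hq]
        have hneg : ¬ (∃ s ∈ S, s i = q i ∧ ∀ j, j ≠ i → q j ≤ s j) := by
          rintro ⟨s, hsS, hsi, hsj⟩
          by_cases hs0 : s = 0
          · apply hq0
            funext j
            by_cases hj : j = i
            · subst hj
              rw [← hsi, hs0]
            · have := hsj j hj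
              rw [hs0] at this
              simpa using this
          · have hms := hSm s hsS hs0
            have h1 : m i ≤ s i := hms i
            have h2 : p i ≤ m i := hpm i
            have h3 : s i = p i - 1 := by rw [hsi, hqi]
            omega
        have hstepq : h p = h q := by
          rw [hpq]
          exact hstep_neg q i hneg
        have hsq : (∑ j, q j) + 1 = ∑ j, p j := by
          rw [hpq]
          exact (hsingle q i).symm ▸ rfl
        have hqm : q ≤ m := fun j => le_trans (hqle j) (hpm j)
        have hlt : (∑ j, q j) < n := by omega
        rw [hstepq, ih _ hlt q rfl hq0 hqm]
  have hm0 : m ≠ 0 := by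
    intro hm0
    have := congrFun hm0 ⟨0, hr⟩
    have := hm ⟨0, hr⟩
    simp_all
  have hwm : w0 m = -1 := by
    rw [hw0, hone 3 m hm3 hm0 (le_refl m), hm3Z]
    norm_num
  have hwme : ∀ i, w0 (m + Pi.single i 1) = 0 := by
    intro i
    rw [hw0, hstep_pos m i ⟨m, hmS, rfl, fun j _ => le_refl _⟩,
      hone 3 m hm3 hm0 (le_refl m), hsumZ, hm3Z]
    norm_num
  -- decomposition helper
  have hdecomp : ∀ (t : Fin r → ℕ), 1 ≤ ∑ i, t i →
      ∃ (i : Fin r) (q : Fin r → ℕ), t = q + Pi.single i 1 ∧ (∑ j, q j) + 1 = ∑ j, t j := by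
    intro t ht
    obtain ⟨i, hi⟩ : ∃ i, 1 ≤ t i := by
      by_contra hc
      push_neg at hc
      have : ∑ i, t i = 0 := Finset.sum_eq_zero (fun i _ => by have := hc i; omega)
      omega
    refine ⟨i, fun j => t j - (Pi.single i 1 : Fin r → ℕ) j, ?_, ?_⟩
    · funext j
      by_cases hj : j = i <;> simp [Pi.single_apply, hj] <;> omega
    · have heq : t = (fun j => t j - (Pi.single i 1 : Fin r → ℕ) j) + Pi.single i 1 := by
        funext j
        by_cases hj : j = i <;> simp [Pi.single_apply, hj] <;> omega
      conv_rhs => rw [heq]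
      rw [hsingle]
  -- main argument
  intro ℓ h1 h2
  set t : Fin r → ℕ := fun j => ℓ j - m j with ht
  have hℓ : ℓ = m + t := by
    funext j
    have hj : m j ≤ ℓ j := h1 j
    simp only [Pi.add_apply, ht]
    omega
  have htm : ∀ j, t j ≤ m j := by
    intro j
    have hj : ℓ j ≤ m j + m j := h2 j
    simp only [ht, Pi.add_apply] at hj ⊢
    omega
  have htsum : (∑ j, t j) ≤ 3 := by
    calc (∑ j, t j) ≤ ∑ j, m j := Finset.sum_le_sum (fun j _ => htm j)
    _ = 3 := hm3
  have hcase : (∑ j, t j) = 0 ∨ (∑ j, t j) = 1 ∨ (∑ j, t j) = 2 ∨ (∑ j, t j) = 3 := by omega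
  rcases hcase with hc | hc | hc | hc
  · -- t = 0, ℓ = m
    have ht0 : t = 0 := by
      funext j
      have := Finset.sum_eq_zero_iff.mp hc j (Finset.mem_univ j)
      simpa using this
    rw [hℓ, ht0, add_zero, hwm]
  · -- t = e^i
    obtain ⟨i, q, hq, hqs⟩ := hdecomp t (by omega)
    have hq0 : q = 0 := by
      funext j
      have : (∑ j, q j) = 0 := by omega
      have := Finset.sum_eq_zero_iff.mp this j (Finset.mem_univ j)
      simpa using this
    rw [hℓ, hq, hq0, zero_add, hwme i]
    norm_num
  · -- t = e^j + e^i
    obtain ⟨i, q, hq, hqs⟩ := hdecomp t (by omega)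
    obtain ⟨i', q', hq', hqs'⟩ := hdecomp q (by omega)
    have hq'0 : q' = 0 := by
      funext j
      have : (∑ j, q' j) = 0 := by omega
      have := Finset.sum_eq_zero_iff.mp this j (Finset.mem_univ j)
      simpa using this
    rw [hq'] at hq
    rw [hq'0, zero_add] at hq
    rw [hℓ, hq, ← add_assoc]
    have := hstep (m + Pi.single i' 1) i
    rw [hwme i'] at this
    linarith
  · -- t = m, ℓ = 2m
    have htm' : t = m := by
      funext j
      by_contra hne
      have hlt : t j < m j := lt_of_le_of_ne (htm j) hne
      have : (∑ j, t j) < ∑ j, m j :=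
        Finset.sum_lt_sum (fun i _ => htm i) ⟨j, Finset.mem_univ j, hlt⟩
      omega
    rw [hℓ, htm']
    exact h2m
end

section
/- In the standing combinatorial setup, for every ℓ ∈ ℕ^r with 0 < ℓ ≤ m (i.e., ℓ ≠ 0 and ℓ_i ≤ m_i for all i) one has h(ℓ) = 1, and consequently w_0(ℓ) = 2 − |ℓ|. In particular w_0(m) = 2 − |m|. -/
/-- for every `0 < ℓ ≤ m` one has `h(ℓ) = 1` and `w₀(ℓ) = 2 - |ℓ|`;
in particular `w₀(m) = 2 - |m|`. -/
theorem hilbert_one_below_mult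
    (r : ℕ) (hr : 1 ≤ r)
    (S : AddSubmonoid (Fin r → ℕ))
    (h : (Fin r → ℕ) → ℕ)
    (h0 : h 0 = 0)
    (hstep_pos : ∀ (ℓ : Fin r → ℕ) (i : Fin r),
      (∃ s ∈ S, s i = ℓ i ∧ ∀ j, j ≠ i → ℓ j ≤ s j) →
        h (ℓ + Pi.single i 1) = h ℓ + 1)
    (hstep_neg : ∀ (ℓ : Fin r → ℕ) (i : Fin r),
      ¬ (∃ s ∈ S, s i = ℓ i ∧ ∀ j, j ≠ i → ℓ j ≤ s j) →
        h (ℓ + Pi.single i 1) = h ℓ)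
    (w0 : (Fin r → ℕ) → ℤ)
    (hw0 : ∀ ℓ, w0 ℓ = 2 * (h ℓ : ℤ) - ∑ i, (ℓ i : ℤ))
    (m : Fin r → ℕ) (hm : ∀ i, 1 ≤ m i) (hmS : m ∈ S)
    (hSm : ∀ s ∈ S, s ≠ 0 → m ≤ s) :
    (∀ ℓ : Fin r → ℕ, ℓ ≠ 0 → ℓ ≤ m →
      h ℓ = 1 ∧ w0 ℓ = 2 - ∑ i, (ℓ i : ℤ)) ∧
    w0 m = 2 - ∑ i, (m i : ℤ) := by
  have key : ∀ n : ℕ, ∀ ℓ : Fin r → ℕ, (∑ i, ℓ i) = n → ℓ ≠ 0 → ℓ ≤ m → h ℓ = 1 := by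
    intro n
    induction n with
    | zero =>
      intro ℓ hsum hne _
      exact absurd (funext fun i =>
        Finset.sum_eq_zero_iff.mp hsum i (Finset.mem_univ i)) hne
    | succ n ih =>
      intro ℓ hsum hne hle
      have hex : ∃ i, 1 ≤ ℓ i := by
        by_contra hc
        push_neg at hc
        have : ∑ i, ℓ i = 0 := Finset.sum_eq_zero fun i _ => by
          have := hc i; omega
        omega
      obtain ⟨i, hi⟩ := hex
      set ℓ' : Fin r → ℕ := Function.update ℓ i (ℓ i - 1) with hℓ'
      have hrec : ℓ' + Pi.single i 1 = ℓ := by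
        funext j
        by_cases hj : j = i
        · subst hj
          simp only [Pi.add_apply, hℓ', Function.update_self, Pi.single_eq_same]
          omega
        · simp [hℓ', Function.update_of_ne hj, Pi.single_eq_of_ne hj]
      have hsum' : ∑ j, ℓ' j = n := by
        have h1 : ∑ j, ℓ j = (∑ j, ℓ' j) + ∑ j, (Pi.single i 1 : Fin r → ℕ) j := by
          rw [← Finset.sum_add_distrib]
          exact Finset.sum_congr rfl fun j _ => by
            rw [← hrec]; rfl
        have h2 : ∑ j, (Pi.single i 1 : Fin r → ℕ) j = 1 := by
          simp [Finset.sum_pi_single]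
        omega
      have hle' : ℓ' ≤ m := by
        intro j
        by_cases hj : j = i
        · subst hj
          simp only [hℓ', Function.update_self]
          have := Pi.le_def.mp hle j; omega
        · simp only [hℓ', Function.update_of_ne hj]
          exact Pi.le_def.mp hle j
      by_cases hz : ℓ' = 0
      · have hp := hstep_pos ℓ' i ⟨0, S.zero_mem, by simp [hz], fun j _ => by simp [hz]⟩
        rw [hrec] at hp
        rw [hp, hz, h0]
      · have hΔ : ¬ (∃ s ∈ S, s i = ℓ' i ∧ ∀ j, j ≠ i → ℓ' j ≤ s j) := by
          rintro ⟨s, hsS, hsi, hsj⟩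
          by_cases hs0 : s = 0
          · apply hz
            funext j
            by_cases hj : j = i
            · subst hj
              have : s j = 0 := by rw [hs0]; rfl
              simp [← hsi, this]
            · have h1 := hsj j hj
              have : s j = 0 := by rw [hs0]; rfl
              simp only [this] at h1
              simpa using Nat.le_antisymm h1 (Nat.zero_le _)
          · have h1 := Pi.le_def.mp (hSm s hsS hs0) i
            have h2 : ℓ' i = ℓ i - 1 := by simp [hℓ']
            have h3 := Pi.le_def.mp hle i
            have h4 := hm i
            omega
        have hp := hstep_neg ℓ' i hΔ
        rw [hrec] at hp
        rw [hp, ih ℓ' hsum' hz hle']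
  have main : ∀ ℓ : Fin r → ℕ, ℓ ≠ 0 → ℓ ≤ m →
      h ℓ = 1 ∧ w0 ℓ = 2 - ∑ i, (ℓ i : ℤ) := by
    intro ℓ hne hle
    have h1 := key (∑ i, ℓ i) ℓ rfl hne hle
    refine ⟨h1, ?_⟩
    rw [hw0, h1]
    ring
  refine ⟨main, ?_⟩
  have hmne : m ≠ 0 := by
    intro hc
    have := hm ⟨0, hr⟩
    rw [hc] at this
    simp at this
  exact (main m hmne le_rfl).2
end

section
/- In the standing combinatorial setup, for every ℓ ∈ ℕ^r one has w_0(ℓ) ≥ 2·j(ℓ) − |ℓ|, where j(ℓ) := min{a ∈ ℕ : ℓ ≤ a·m} (this minimum exists because every m_i ≥ 1). -/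
/-- `w₀(ℓ) ≥ 2·j(ℓ) - |ℓ|` where `j(ℓ) = min {a : ℓ ≤ a • m}`. -/
theorem weight_ge_two_j_sub_norm
    (r : ℕ) (hr : 1 ≤ r)
    (S : AddSubmonoid (Fin r → ℕ))
    (h : (Fin r → ℕ) → ℕ)
    (h0 : h 0 = 0)
    (hstep_pos : ∀ (ℓ : Fin r → ℕ) (i : Fin r),
      (∃ s ∈ S, s i = ℓ i ∧ ∀ j, j ≠ i → ℓ j ≤ s j) →
        h (ℓ + Pi.single i 1) = h ℓ + 1)
    (hstep_neg : ∀ (ℓ : Fin r → ℕ) (i : Fin r),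
      ¬ (∃ s ∈ S, s i = ℓ i ∧ ∀ j, j ≠ i → ℓ j ≤ s j) →
        h (ℓ + Pi.single i 1) = h ℓ)
    (w0 : (Fin r → ℕ) → ℤ)
    (hw0 : ∀ ℓ, w0 ℓ = 2 * (h ℓ : ℤ) - ∑ i, (ℓ i : ℤ))
    (m : Fin r → ℕ) (hm : ∀ i, 1 ≤ m i) (hmS : m ∈ S)
    (hSm : ∀ s ∈ S, s ≠ 0 → m ≤ s) :
    ∀ ℓ : Fin r → ℕ,
      2 * ((sInf {a : ℕ | ℓ ≤ a • m} : ℕ) : ℤ) - ∑ i, (ℓ i : ℤ) ≤ w0 ℓ := by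
  have hne : ∀ ℓ : Fin r → ℕ, {a : ℕ | ℓ ≤ a • m}.Nonempty := by
    intro ℓ
    refine ⟨∑ i, ℓ i, Pi.le_def.mpr fun k => ?_⟩
    have h1 : ℓ k ≤ ∑ i, ℓ i :=
      Finset.single_le_sum (fun i _ => Nat.zero_le _) (Finset.mem_univ k)
    have h2 : (∑ i, ℓ i) * 1 ≤ (∑ i, ℓ i) * m k := Nat.mul_le_mul_left _ (hm k)
    have : ((∑ i, ℓ i) • m) k = (∑ i, ℓ i) * m k := by
      simp [Pi.smul_apply, smul_eq_mul]
    omega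
  have key : ∀ n (ℓ : Fin r → ℕ), ∑ i, ℓ i = n →
      sInf {a : ℕ | ℓ ≤ a • m} ≤ h ℓ := by
    intro n
    induction n using Nat.strong_induction_on with
    | _ n ih =>
      intro ℓ hn
      by_cases hz : ℓ = 0
      · subst hz
        rw [h0]
        exact Nat.sInf_le (by simp [Pi.le_def])
      · obtain ⟨i, hi⟩ : ∃ i, ℓ i ≠ 0 := by
          by_contra hc; push_neg at hc; exact hz (funext hc)
        set ℓ' := Function.update ℓ i (ℓ i - 1) with hℓ'
        have hdec : ℓ = ℓ' + Pi.single i 1 := by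
          funext k
          by_cases hk : k = i
          · subst hk
            simp only [Pi.add_apply, hℓ', Function.update_self, Pi.single_eq_same]
            omega
          · simp [hℓ', Function.update_of_ne hk, Pi.single_eq_of_ne hk]
        have hsum : ∑ k, ℓ' k < n := by
          have : ∑ k, ℓ' k + 1 = ∑ k, ℓ k := by
            rw [hdec]
            simp [Finset.sum_add_distrib]
          omega
        have hj' := ih _ hsum ℓ' rfl
        set a := sInf {b : ℕ | ℓ' ≤ b • m} with ha
        have ham : ℓ' ≤ a • m := Nat.sInf_mem (hne ℓ')
        have hamk : ∀ k, ℓ' k ≤ a * m k := by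
          intro k
          have := Pi.le_def.mp ham k
          simpa [Pi.smul_apply, smul_eq_mul] using this
        by_cases hΔ : ∃ s ∈ S, s i = ℓ' i ∧ ∀ j, j ≠ i → ℓ' j ≤ s j
        · have hh := hstep_pos ℓ' i hΔ
          have hle : sInf {b : ℕ | ℓ ≤ b • m} ≤ a + 1 := by
            apply Nat.sInf_le
            show ℓ ≤ (a + 1) • m
            rw [hdec]
            refine Pi.le_def.mpr fun k => ?_
            have h1 := hamk k
            have h2 := hm k
            have h3 : ((a + 1) • m) k = (a + 1) * m k := by
              simp [Pi.smul_apply, smul_eq_mul]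
            by_cases hk : k = i
            · subst hk
              simp only [Pi.add_apply, Pi.single_eq_same, h3]
              nlinarith
            · simp only [Pi.add_apply, Pi.single_eq_of_ne hk, h3]
              nlinarith
          rw [hdec] at hle ⊢; rw [hh]
          omega
        · have hh := hstep_neg ℓ' i hΔ
          have hle : sInf {b : ℕ | ℓ ≤ b • m} ≤ a := by
            apply Nat.sInf_le
            show ℓ ≤ a • m
            rw [hdec]
            refine Pi.le_def.mpr fun k => ?_
            by_cases hk : k = i
            · subst hk
              simp only [Pi.add_apply, Pi.single_eq_same]
              by_contra hcon
              have heq : (a • m) k = ℓ' k := by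
                have h1 := hamk k
                have h2 : (a • m) k = a * m k := by
                  simp [Pi.smul_apply, smul_eq_mul]
                omega
              exact hΔ ⟨a • m, S.nsmul_mem hmS a, heq,
                fun j _ => Pi.le_def.mp ham j⟩
            · simp only [Pi.add_apply, Pi.single_eq_of_ne hk, add_zero]
              exact Pi.le_def.mp ham k
          rw [hdec] at hle ⊢; rw [hh]
          omega
  intro ℓ
  rw [hw0]
  have h1 := key (∑ i, ℓ i) ℓ rfl
  have h2 : ((sInf {a : ℕ | ℓ ≤ a • m} : ℕ) : ℤ) ≤ (h ℓ : ℤ) := by exact_mod_cast h1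
  linarith
end

section
/- Suppose, in addition to the standing combinatorial setup, that |m| ≥ 3. Then for every j ∈ ℕ and every ℓ ∈ ℕ^r with |ℓ| ≤ j·|m| and ℓ ≠ j·m, one has the strict inequality w_0(ℓ) > (2 − |m|)·j. (This is the weight-theoretic content of the vanishing lemma for the E^1-page of the level-filtration spectral sequence below level j|m|, underlying the definition of minimal spectral cycles.) -/
/-- if `|m| ≥ 3`, then for every `j ∈ ℕ` and every `ℓ` with
`|ℓ| ≤ j·|m|` and `ℓ ≠ j·m` one has the strict inequality `w₀(ℓ) > (2 - |m|)·j`. -/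
theorem weight_gt_of_ne_jm
    (r : ℕ) (hr : 1 ≤ r)
    (S : AddSubmonoid (Fin r → ℕ))
    (h : (Fin r → ℕ) → ℕ)
    (h0 : h 0 = 0)
    (hstep_pos : ∀ (ℓ : Fin r → ℕ) (i : Fin r),
      (∃ s ∈ S, s i = ℓ i ∧ ∀ j, j ≠ i → ℓ j ≤ s j) →
        h (ℓ + Pi.single i 1) = h ℓ + 1)
    (hstep_neg : ∀ (ℓ : Fin r → ℕ) (i : Fin r),
      ¬ (∃ s ∈ S, s i = ℓ i ∧ ∀ j, j ≠ i → ℓ j ≤ s j) →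
        h (ℓ + Pi.single i 1) = h ℓ)
    (w0 : (Fin r → ℕ) → ℤ)
    (hw0 : ∀ ℓ, w0 ℓ = 2 * (h ℓ : ℤ) - ∑ i, (ℓ i : ℤ))
    (m : Fin r → ℕ) (hm : ∀ i, 1 ≤ m i) (hmS : m ∈ S)
    (hSm : ∀ s ∈ S, s ≠ 0 → m ≤ s)
    (hm3 : 3 ≤ ∑ i, m i) :
    ∀ (j : ℕ) (ℓ : Fin r → ℕ), (∑ i, ℓ i) ≤ j * (∑ i, m i) → ℓ ≠ j • m →
      (2 - (∑ i, (m i : ℤ))) * (j : ℤ) < w0 ℓ := by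
  classical
  -- for every ℓ there is some k with ℓ ≤ k • m
  have hP : ∀ ℓ : Fin r → ℕ, ∃ k, ∀ i, ℓ i ≤ k * m i := by
    intro ℓ
    refine ⟨∑ i, ℓ i, fun i => ?_⟩
    calc ℓ i ≤ ∑ i, ℓ i :=
          Finset.single_le_sum (fun _ _ => Nat.zero_le _) (Finset.mem_univ i)
      _ ≤ (∑ i, ℓ i) * m i := Nat.le_mul_of_pos_right _ (hm i)
  set K : (Fin r → ℕ) → ℕ := fun ℓ => Nat.find (hP ℓ) with hKdef
  have hKspec : ∀ ℓ i, ℓ i ≤ K ℓ * m i := fun ℓ i => Nat.find_spec (hP ℓ) i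
  have hKmin : ∀ (ℓ : Fin r → ℕ) (t : ℕ), t < K ℓ → ∃ i, t * m i < ℓ i := by
    intro ℓ t ht
    have := Nat.find_min (hP ℓ) ht
    push_neg at this
    exact this
  have hKle : ∀ (ℓ : Fin r → ℕ) (t : ℕ), (∀ t' < t, ∃ i, t' * m i < ℓ i) → t ≤ K ℓ := by
    intro ℓ t hall
    rw [hKdef]
    rw [Nat.le_find_iff]
    intro t' ht'
    obtain ⟨i, hi⟩ := hall t' ht'
    intro hcon
    exact absurd (hcon i) (not_le.mpr hi)
  -- key lemma : K ℓ ≤ h ℓ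
  have key : ∀ (n : ℕ) (ℓ : Fin r → ℕ), (∑ i, ℓ i) ≤ n → K ℓ ≤ h ℓ := by
    intro n
    induction n with
    | zero =>
      intro ℓ hℓ
      have hℓ0 : ℓ = 0 := by
        funext i
        have : ℓ i ≤ ∑ i, ℓ i :=
          Finset.single_le_sum (fun _ _ => Nat.zero_le _) (Finset.mem_univ i)
        simp only [Pi.zero_apply]
        omega
      rw [hℓ0, h0]
      have : K (0 : Fin r → ℕ) = 0 := by
        rw [hKdef]
        exact Nat.find_eq_zero _ |>.mpr (fun i => by simp)
      omega
    | succ n IH =>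
      intro ℓ hℓ
      rcases Nat.eq_zero_or_pos (K ℓ) with hk0 | hk1
      · omega
      set k := K ℓ with hk
      -- find a coordinate where (k-1)•m is exceeded
      obtain ⟨i, hi⟩ := hKmin ℓ (k - 1) (by omega)
      have hℓi : (k - 1) * m i + 1 ≤ ℓ i := hi
      have hℓipos : 1 ≤ ℓ i := by omega
      set a : Fin r → ℕ := Function.update ℓ i (ℓ i - 1) with hadef
      have hai : a i = ℓ i - 1 := Function.update_self i _ ℓ
      have haipos : a i + 1 = ℓ i := by omega
      have haj : ∀ j, j ≠ i → a j = ℓ j := fun j hj => Function.update_of_ne hj _ ℓ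
      have hla : ℓ = a + Pi.single i 1 := by
        funext j
        by_cases hj : j = i
        · subst hj
          simp only [Pi.add_apply, hai, Pi.single_eq_same]
          omega
        · simp only [Pi.add_apply, haj j hj, Pi.single_eq_of_ne hj]
          omega
      have hsuma : (∑ j, a j) + 1 = ∑ j, ℓ j := by
        have h1 : ∑ j, a j = (ℓ i - 1) + ∑ j ∈ Finset.univ.erase i, ℓ j := by
          rw [hadef, Finset.sum_update_of_mem (Finset.mem_univ i)]
          rw [Finset.sdiff_singleton_eq_erase]
        have h2 : ℓ i + ∑ j ∈ Finset.univ.erase i, ℓ j = ∑ j, ℓ j :=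
          Finset.add_sum_erase _ ℓ (Finset.mem_univ i)
        omega
      have hIH : K a ≤ h a := IH a (by omega)
      by_cases hA : (∀ j, j ≠ i → ℓ j ≤ (k - 1) * m j) ∧ ℓ i = (k - 1) * m i + 1
      · -- positive step with witness (k-1) • m
        have hsmem : (k - 1) • m ∈ S := nsmul_mem hmS (k - 1)
        have hsval : ∀ j, ((k - 1) • m) j = (k - 1) * m j := by
          intro j; simp [Pi.smul_apply, smul_eq_mul]
        have hdelta : ∃ s ∈ S, s i = a i ∧ ∀ j, j ≠ i → a j ≤ s j := by
          refine ⟨(k - 1) • m, hsmem, ?_, ?_⟩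
          · rw [hsval, hai, hA.2, Nat.add_sub_cancel]
          · intro j hj
            rw [hsval, haj j hj]
            exact hA.1 j hj
        have hstep := hstep_pos a i hdelta
        rw [hla, hstep]
        -- K a ≥ k - 1
        have hKa : k - 1 ≤ K a := by
          apply hKle
          intro t' ht'
          refine ⟨i, ?_⟩
          have hai2 : a i = (k - 1) * m i := by omega
          have e2 : t' * m i + m i ≤ (k - 1) * m i := by
            calc t' * m i + m i = (t' + 1) * m i := by ring
              _ ≤ (k - 1) * m i := Nat.mul_le_mul_right _ (by omega)
          have := hm i
          linarith
        omega
      · -- K a ≥ k, and h ℓ ≥ h a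
        have hKa : k ≤ K a := by
          apply hKle
          intro t ht
          by_cases htk : t = k - 1
          · subst htk
            by_cases hall : ∀ j, j ≠ i → ℓ j ≤ (k - 1) * m j
            · have hne2 : (k - 1) * m i + 1 < ℓ i :=
                lt_of_le_of_ne hℓi (fun hcon => hA ⟨hall, hcon.symm⟩)
              refine ⟨i, ?_⟩
              linarith
            · push_neg at hall
              obtain ⟨j, hji, hj⟩ := hall
              refine ⟨j, ?_⟩
              rw [haj j hji]
              exact hj
          · obtain ⟨j, hj⟩ := hKmin ℓ t (by omega)
            by_cases hji : j = i
            · subst hji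
              refine ⟨j, ?_⟩
              have e2 : t * m j + m j ≤ (k - 1) * m j := by
                calc t * m j + m j = (t + 1) * m j := by ring
                  _ ≤ (k - 1) * m j := Nat.mul_le_mul_right _ (by omega)
              have := hm j
              linarith
            · refine ⟨j, ?_⟩
              rw [haj j hji]
              exact hj
        have hha : h a ≤ h ℓ := by
          by_cases hd : ∃ s ∈ S, s i = a i ∧ ∀ j, j ≠ i → a j ≤ s j
          · rw [hla, hstep_pos a i hd]; omega
          · rw [hla, hstep_neg a i hd]
        omega
  -- main argument
  intro j ℓ hsum hne
  have hkh : K ℓ ≤ h ℓ := key (∑ i, ℓ i) ℓ le_rfl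
  have hnk : (∑ i, ℓ i) ≤ K ℓ * (∑ i, m i) := by
    calc (∑ i, ℓ i) ≤ ∑ i, K ℓ * m i := Finset.sum_le_sum (fun i _ => hKspec ℓ i)
      _ = K ℓ * (∑ i, m i) := by rw [Finset.mul_sum]
  rw [hw0 ℓ]
  have hcast : (∑ i, ((ℓ i : ℤ))) = ((∑ i, ℓ i : ℕ) : ℤ) := by push_cast; ring
  have hcastm : (∑ i, ((m i : ℤ))) = ((∑ i, m i : ℕ) : ℤ) := by push_cast; ring
  rw [hcast, hcastm]
  have hM3 : (3 : ℤ) ≤ ((∑ i, m i : ℕ) : ℤ) := by exact_mod_cast hm3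
  have hkh' : ((K ℓ : ℕ) : ℤ) ≤ (h ℓ : ℤ) := by exact_mod_cast hkh
  have hnk' : ((∑ i, ℓ i : ℕ) : ℤ) ≤ ((K ℓ : ℕ) : ℤ) * ((∑ i, m i : ℕ) : ℤ) := by
    exact_mod_cast hnk
  have hsum' : ((∑ i, ℓ i : ℕ) : ℤ) ≤ (j : ℤ) * ((∑ i, m i : ℕ) : ℤ) := by
    exact_mod_cast hsum
  rcases lt_trichotomy (K ℓ) j with hkj | hkj | hkj
  · have hkj' : ((K ℓ : ℕ) : ℤ) + 1 ≤ (j : ℤ) := by exact_mod_cast hkj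
    have hprod : (1 : ℤ) ≤ (((∑ i, m i : ℕ) : ℤ) - 2) * ((j : ℤ) - ((K ℓ : ℕ) : ℤ)) := by
      have := mul_le_mul (show (1:ℤ) ≤ ((∑ i, m i : ℕ) : ℤ) - 2 by linarith)
        (show (1:ℤ) ≤ (j : ℤ) - ((K ℓ : ℕ) : ℤ) by linarith)
        (by norm_num) (by linarith)
      linarith
    nlinarith
  · rcases lt_or_eq_of_le hsum with hlt | heq
    · have hlt' : ((∑ i, ℓ i : ℕ) : ℤ) < (j : ℤ) * ((∑ i, m i : ℕ) : ℤ) := by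
        exact_mod_cast hlt
      have hkj' : ((K ℓ : ℕ) : ℤ) = (j : ℤ) := by exact_mod_cast hkj
      nlinarith
    · exfalso
      apply hne
      have hle : ∀ i ∈ Finset.univ, ℓ i ≤ j * m i := by
        intro i _
        have := hKspec ℓ i
        rw [hkj] at this
        exact this
      have hsums : (∑ i, ℓ i) = ∑ i, j * m i := by
        rw [heq, Finset.mul_sum]
      have heach := (Finset.sum_eq_sum_iff_of_le hle).mp hsums
      funext i
      have hi := heach i (Finset.mem_univ i)
      simp only [Pi.smul_apply, smul_eq_mul]
      omega
  · have hkj' : (j : ℤ) + 1 ≤ ((K ℓ : ℕ) : ℤ) := by exact_mod_cast hkj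
    nlinarith
end

section
/- In the standing combinatorial setup, for every j ∈ ℕ one has w_0(j·m) ≥ (2 − |m|)·j; moreover, if w_0(j·m) = (2 − |m|)·j, then every s ∈ S which is not of the form a·m for some 0 ≤ a ≤ j − 1 satisfies s ≥ j·m coordinatewise, i.e., S ∖ {0, m, 2m, …, (j−1)m} ⊆ jm + ℕ^r. (This is the weight-theoretic content of the lemma that the existence of a minimal spectral cycle of weight (2−|m|)j + k forces the semigroup of values above jm.) -/
private lemma h_mono_aux {r : ℕ} {S : AddSubmonoid (Fin r → ℕ)} {h : (Fin r → ℕ) → ℕ}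
    (hstep_pos : ∀ (ℓ : Fin r → ℕ) (i : Fin r),
      (∃ s ∈ S, s i = ℓ i ∧ ∀ j, j ≠ i → ℓ j ≤ s j) →
        h (ℓ + Pi.single i 1) = h ℓ + 1)
    (hstep_neg : ∀ (ℓ : Fin r → ℕ) (i : Fin r),
      ¬ (∃ s ∈ S, s i = ℓ i ∧ ∀ j, j ≠ i → ℓ j ≤ s j) →
        h (ℓ + Pi.single i 1) = h ℓ) :
    ∀ (n : ℕ) (ℓ ℓ' : Fin r → ℕ), ℓ ≤ ℓ' → (∑ i, (ℓ' i - ℓ i)) ≤ n → h ℓ ≤ h ℓ' := by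
  intro n
  induction n with
  | zero =>
    intro ℓ ℓ' hle hsum
    have hz : ∀ i ∈ Finset.univ, ℓ' i - ℓ i = 0 :=
      Finset.sum_eq_zero_iff.mp (Nat.le_zero.mp hsum)
    have heq : ℓ = ℓ' := funext fun i => by
      have h1 : ℓ i ≤ ℓ' i := hle i
      have h2 : ℓ' i - ℓ i = 0 := hz i (Finset.mem_univ i)
      omega
    rw [heq]
  | succ n ih =>
    intro ℓ ℓ' hle hsum
    by_cases heq : ℓ = ℓ'
    · rw [heq]
    · obtain ⟨i, hi⟩ := Function.ne_iff.mp heq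
      have hlt : ℓ i < ℓ' i := lt_of_le_of_ne (hle i) hi
      set ℓ2 : Fin r → ℕ := ℓ + Pi.single i 1 with hℓ2
      have hℓ2app : ∀ t, ℓ2 t = ℓ t + (if t = i then 1 else 0) := by
        intro t
        simp [hℓ2, Pi.single_apply]
      have hle2 : ℓ2 ≤ ℓ' := by
        intro t
        rw [hℓ2app t]
        by_cases ht : t = i
        · subst ht; simp; omega
        · simp [ht]; exact hle t
      have hsum2 : (∑ t, (ℓ' t - ℓ2 t)) ≤ n := by
        have hs1 : (∑ t, (ℓ' t - ℓ t)) =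
            (∑ t, (ℓ' t - ℓ2 t)) + ∑ t, (if t = i then 1 else 0) := by
          rw [← Finset.sum_add_distrib]
          refine Finset.sum_congr rfl fun t _ => ?_
          have h1 : ℓ t ≤ ℓ' t := hle t
          have h2 : ℓ2 t ≤ ℓ' t := hle2 t
          rw [hℓ2app t] at h2 ⊢
          by_cases ht : t = i
          · simp only [if_pos ht] at h2 ⊢; omega
          · simp only [if_neg ht] at h2 ⊢; omega
        have hs2 : (∑ t, (if t = i then 1 else 0 : ℕ)) = 1 := by simp
        omega
      have hstep : h ℓ ≤ h ℓ2 := by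
        by_cases hw : ∃ s ∈ S, s i = ℓ i ∧ ∀ j, j ≠ i → ℓ j ≤ s j
        · rw [hℓ2, hstep_pos ℓ i hw]; omega
        · rw [hℓ2, hstep_neg ℓ i hw]
      exact le_trans hstep (ih ℓ2 ℓ' hle2 hsum2)

private lemma h_mono {r : ℕ} {S : AddSubmonoid (Fin r → ℕ)} {h : (Fin r → ℕ) → ℕ}
    (hstep_pos : ∀ (ℓ : Fin r → ℕ) (i : Fin r),
      (∃ s ∈ S, s i = ℓ i ∧ ∀ j, j ≠ i → ℓ j ≤ s j) →
        h (ℓ + Pi.single i 1) = h ℓ + 1)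
    (hstep_neg : ∀ (ℓ : Fin r → ℕ) (i : Fin r),
      ¬ (∃ s ∈ S, s i = ℓ i ∧ ∀ j, j ≠ i → ℓ j ≤ s j) →
        h (ℓ + Pi.single i 1) = h ℓ)
    {ℓ ℓ' : Fin r → ℕ} (hle : ℓ ≤ ℓ') : h ℓ ≤ h ℓ' :=
  h_mono_aux hstep_pos hstep_neg (∑ i, (ℓ' i - ℓ i)) ℓ ℓ' hle le_rfl

/-- `w₀(j·m) ≥ (2 - |m|)·j`, and if equality holds then every `s ∈ S`
not of the form `a·m` with `0 ≤ a ≤ j - 1` satisfies `s ≥ j·m` coordinatewise. -/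
theorem weight_jm_and_semigroup_above
    (r : ℕ) (hr : 1 ≤ r)
    (S : AddSubmonoid (Fin r → ℕ))
    (h : (Fin r → ℕ) → ℕ)
    (h0 : h 0 = 0)
    (hstep_pos : ∀ (ℓ : Fin r → ℕ) (i : Fin r),
      (∃ s ∈ S, s i = ℓ i ∧ ∀ j, j ≠ i → ℓ j ≤ s j) →
        h (ℓ + Pi.single i 1) = h ℓ + 1)
    (hstep_neg : ∀ (ℓ : Fin r → ℕ) (i : Fin r),
      ¬ (∃ s ∈ S, s i = ℓ i ∧ ∀ j, j ≠ i → ℓ j ≤ s j) →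
        h (ℓ + Pi.single i 1) = h ℓ)
    (w0 : (Fin r → ℕ) → ℤ)
    (hw0 : ∀ ℓ, w0 ℓ = 2 * (h ℓ : ℤ) - ∑ i, (ℓ i : ℤ))
    (m : Fin r → ℕ) (hm : ∀ i, 1 ≤ m i) (hmS : m ∈ S)
    (hSm : ∀ s ∈ S, s ≠ 0 → m ≤ s) :
    ∀ j : ℕ,
      ((2 - (∑ i, (m i : ℤ))) * (j : ℤ) ≤ w0 (j • m)) ∧
      (w0 (j • m) = (2 - (∑ i, (m i : ℤ))) * (j : ℤ) →
        ∀ s ∈ S, (∀ a : ℕ, a < j → s ≠ a • m) → j • m ≤ s) := by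
  intro j
  have i0 : Fin r := ⟨0, hr⟩
  -- one guaranteed +1 step in each segment b•m → (b+1)•m
  have Lstep : ∀ b : ℕ, h (b • m) + 1 ≤ h ((b + 1) • m) := by
    intro b
    have hwit : ∃ t ∈ S, t i0 = (b • m) i0 ∧ ∀ j, j ≠ i0 → (b • m) j ≤ t j :=
      ⟨b • m, S.nsmul_mem hmS b, rfl, fun _ _ => le_rfl⟩
    have hle : (b • m) + Pi.single i0 1 ≤ (b + 1) • m := by
      intro t
      have hmt := hm t
      have hexp : (b + 1) * m t = b * m t + m t := by ring
      by_cases ht : t = i0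
      · subst ht
        simp only [Pi.add_apply, Pi.single_eq_same, Pi.smul_apply, smul_eq_mul]
        omega
      · simp only [Pi.add_apply, Pi.single_eq_of_ne ht, Pi.smul_apply, smul_eq_mul]
        omega
    calc h (b • m) + 1 = h ((b • m) + Pi.single i0 1) := (hstep_pos _ _ hwit).symm
      _ ≤ h ((b + 1) • m) := h_mono hstep_pos hstep_neg hle
  have L : ∀ c b : ℕ, h (b • m) + c ≤ h ((b + c) • m) := by
    intro c
    induction c with
    | zero => intro b; simp
    | succ c ih =>
      intro b
      have h1 := ih b
      have h2 := Lstep (b + c)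
      have heq : b + (c + 1) = (b + c) + 1 := by omega
      rw [heq]
      omega
  have hj_le : j ≤ h (j • m) := by
    have := L j 0
    simpa [h0] using this
  have hsum : (∑ i, (((j • m) i : ℕ) : ℤ)) = (j : ℤ) * ∑ i, (m i : ℤ) := by
    rw [Finset.mul_sum]
    refine Finset.sum_congr rfl fun i _ => ?_
    simp only [Pi.smul_apply, smul_eq_mul]
    push_cast
    ring
  constructor
  · rw [hw0, hsum]
    have hc : (j : ℤ) ≤ (h (j • m) : ℤ) := by exact_mod_cast hj_le
    nlinarith [hc]
  · intro heq s hs hsa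
    have hHj : h (j • m) = j := by
      rw [hw0, hsum] at heq
      have : (h (j • m) : ℤ) = (j : ℤ) := by nlinarith [heq]
      exact_mod_cast this
    by_contra hcon
    simp only [Pi.le_def, not_forall, not_le] at hcon
    obtain ⟨i1, hi1⟩ := hcon
    have hi1' : s i1 < j * m i1 := by
      simpa [Pi.smul_apply, smul_eq_mul] using hi1
    have hj1 : 1 ≤ j := by
      rcases Nat.eq_zero_or_pos j with hj0 | hj0
      · subst hj0; simp at hi1'
      · exact hj0
    have hs0 : s ≠ 0 := by
      intro h'
      exact hsa 0 hj1 (by simp [h'])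
    have hms : m ≤ s := hSm s hs hs0
    set a : ℕ := Nat.findGreatest (fun b => ∀ i, b * m i ≤ s i) (s i1 + 1) with ha_def
    have hP1 : ∀ i, 1 * m i ≤ s i := fun i => by simpa using hms i
    have ha1 : 1 ≤ a := Nat.le_findGreatest (by omega) hP1
    have hPa : ∀ i, a * m i ≤ s i :=
      Nat.findGreatest_spec (P := fun b => ∀ i, b * m i ≤ s i)
        (by omega : 1 ≤ s i1 + 1) hP1
    have haj : a < j := by
      have h1 : a * m i1 < j * m i1 := lt_of_le_of_lt (hPa i1) hi1'
      exact Nat.lt_of_mul_lt_mul_right h1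
    have hasi : a ≤ s i1 := by
      have h1 := hPa i1
      have h2 := hm i1
      nlinarith
    have hnPa1 : ¬ ∀ i, (a + 1) * m i ≤ s i :=
      Nat.findGreatest_is_greatest (by omega : a < a + 1) (by omega : a + 1 ≤ s i1 + 1)
    push_neg at hnPa1
    obtain ⟨i2, hi2⟩ := hnPa1
    have hsne : s ≠ a • m := hsa a haj
    have hk : ∃ k, a * m k < s k := by
      by_contra hc
      push_neg at hc
      refine hsne (funext fun i => ?_)
      have h1 := hPa i
      have h2 := hc i
      simp only [Pi.smul_apply, smul_eq_mul]
      omega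
    obtain ⟨k, hk⟩ := hk
    -- key: two +1 steps inside the segment a•m → (a+1)•m
    have key : h (a • m) + 2 ≤ h ((a + 1) • m) := by
      by_cases hcase : a * m i2 < s i2
      · -- walk coordinate i2 from a*m i2 up to s i2, two witnessed steps
        set ℓ2 : Fin r → ℕ := Function.update (a • m) i2 (s i2) with hℓ2
        have step1 : h (a • m) + 1 ≤ h ℓ2 := by
          have hwit : ∃ t ∈ S, t i2 = (a • m) i2 ∧ ∀ j, j ≠ i2 → (a • m) j ≤ t j :=
            ⟨a • m, S.nsmul_mem hmS a, rfl, fun _ _ => le_rfl⟩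
          rw [← hstep_pos _ _ hwit]
          apply h_mono hstep_pos hstep_neg
          intro t
          by_cases ht : t = i2
          · subst ht
            simp only [Pi.add_apply, Pi.single_eq_same, hℓ2, Function.update_self,
              Pi.smul_apply, smul_eq_mul]
            omega
          · simp only [Pi.add_apply, Pi.single_eq_of_ne ht, hℓ2,
              Function.update_of_ne ht, Pi.smul_apply, smul_eq_mul]
            omega
        have step2 : h ℓ2 + 1 ≤ h ((a + 1) • m) := by
          have hwit : ∃ t ∈ S, t i2 = ℓ2 i2 ∧ ∀ j, j ≠ i2 → ℓ2 j ≤ t j := by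
            refine ⟨s, hs, by simp [hℓ2], fun j hj => ?_⟩
            simp only [hℓ2, Function.update_of_ne hj, Pi.smul_apply, smul_eq_mul]
            exact hPa j
          rw [← hstep_pos _ _ hwit]
          apply h_mono hstep_pos hstep_neg
          intro t
          have hmt := hm t
          have hexp : (a + 1) * m t = a * m t + m t := by ring
          by_cases ht : t = i2
          · subst ht
            simp only [Pi.add_apply, Pi.single_eq_same, hℓ2, Function.update_self,
              Pi.smul_apply, smul_eq_mul]
            omega
          · simp only [Pi.add_apply, Pi.single_eq_of_ne ht, hℓ2,
              Function.update_of_ne ht, Pi.smul_apply, smul_eq_mul]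
            omega
        omega
      · -- s i2 = a * m i2 ; step in coordinate k first, then i2, witnessed by s
        have hsi2 : s i2 = a * m i2 := le_antisymm (by omega) (hPa i2)
        have hki2 : k ≠ i2 := by
          intro hkk; rw [hkk] at hk; omega
        set ℓ1 : Fin r → ℕ := (a • m) + Pi.single k 1 with hℓ1
        have step1 : h ℓ1 = h (a • m) + 1 := by
          apply hstep_pos
          exact ⟨a • m, S.nsmul_mem hmS a, rfl, fun _ _ => le_rfl⟩
        have step2 : h (ℓ1 + Pi.single i2 1) = h ℓ1 + 1 := by
          apply hstep_pos
          refine ⟨s, hs, ?_, ?_⟩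
          · simp only [hℓ1, Pi.add_apply, Pi.single_eq_of_ne (Ne.symm hki2),
              Pi.smul_apply, smul_eq_mul]
            omega
          · intro t ht
            by_cases htk : t = k
            · subst htk
              simp only [hℓ1, Pi.add_apply, Pi.single_eq_same, Pi.smul_apply, smul_eq_mul]
              omega
            · simp only [hℓ1, Pi.add_apply, Pi.single_eq_of_ne htk, Pi.smul_apply,
                smul_eq_mul]
              have := hPa t
              omega
        have step3 : h (ℓ1 + Pi.single i2 1) ≤ h ((a + 1) • m) := by
          apply h_mono hstep_pos hstep_neg
          intro t
          have hmt := hm t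
          have hexp : (a + 1) * m t = a * m t + m t := by ring
          by_cases ht2 : t = i2
          · subst ht2
            simp only [hℓ1, Pi.add_apply, Pi.single_eq_same,
              Pi.single_eq_of_ne (Ne.symm hki2), Pi.smul_apply, smul_eq_mul]
            omega
          · by_cases htk : t = k
            · subst htk
              simp only [hℓ1, Pi.add_apply, Pi.single_eq_same,
                Pi.single_eq_of_ne ht2, Pi.smul_apply, smul_eq_mul]
              omega
            · simp only [hℓ1, Pi.add_apply, Pi.single_eq_of_ne ht2,
                Pi.single_eq_of_ne htk, Pi.smul_apply, smul_eq_mul]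
              omega
        omega
    have h1 : a ≤ h (a • m) := by
      have := L a 0
      simpa [h0] using this
    have h2 : h ((a + 1) • m) + (j - (a + 1)) ≤ h (j • m) := by
      have hL := L (j - (a + 1)) (a + 1)
      have heq' : (a + 1) + (j - (a + 1)) = j := by omega
      rwa [heq'] at hL
    omega
end

section
/- Let ℓ ∈ ℕ^r, n ∈ ℤ, k ∈ ℕ, and let T ⊆ {1, …, r} be a subset with |T| = k + 1. For I ⊆ T write ℓ_I := ℓ + Σ_{i∈I} e^i. Suppose that w_0(ℓ_I) ≤ n for every proper subset I ⊊ T and that w_0(ℓ_T) = n + 1. Then w_0(ℓ_I) = n − k + |I| for every subset I ⊆ T. (This is the weight pattern on the (k+1)-cube rooted at ℓ which generates a nonzero class on the E^1-page of the level-filtration spectral sequence.) -/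
/-! Restricted to the cube, `f I := w₀(ℓ_I)` is a submodular set function whose increments are
at most `1`. Submodularity makes the increment `f (I ∪ {x}) - f I` antitone in `I`, and at the
top of the cube it is at least `1` because `f (T \ {x}) ≤ n < n + 1 = f T`. Hence every edge of
the cube raises the weight by exactly `1`, and `f I = f T - |T \ I|`. -/

namespace Finset

variable {ι : Type*} [DecidableEq ι] {f : Finset ι → ℤ}

theorem sub_le_sub_insert_of_submodular
    (hf : ∀ A B, f (A ∩ B) + f (A ∪ B) ≤ f A + f B)
    {A B : Finset ι} {x : ι} (hAB : A ⊆ B) (hx : x ∉ B) :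
    f (insert x B) - f B ≤ f (insert x A) - f A := by
  have h := hf (insert x A) B
  rw [insert_inter_of_notMem hx, inter_eq_left.mpr hAB, insert_union,
    union_eq_right.mpr hAB] at h
  linarith

theorem eq_sub_card_sdiff_of_submodular
    (hf : ∀ A B, f (A ∩ B) + f (A ∪ B) ≤ f A + f B)
    (hstep : ∀ A, ∀ x ∉ A, f (insert x A) ≤ f A + 1)
    {T : Finset ι} (htop : ∀ x ∈ T, f (T.erase x) + 1 ≤ f T) :
    ∀ I ⊆ T, f I = f T - #(T \ I) := by
  suffices h : ∀ D ⊆ T, f (T \ D) = f T - #D by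
    intro I hIT
    simpa only [sdiff_sdiff_eq_self hIT] using h (T \ I) sdiff_subset
  intro D
  induction D using Finset.induction_on with
  | empty => simp
  | insert x D hxD ih =>
    intro hxDT
    have hxT : x ∈ T := hxDT (mem_insert_self x D)
    have hD := ih ((subset_insert x D).trans hxDT)
    have hxA : x ∉ T \ insert x D := fun h => (mem_sdiff.mp h).2 (mem_insert_self x D)
    have hA : insert x (T \ insert x D) = T \ D := by
      rw [sdiff_insert, insert_erase (mem_sdiff.mpr ⟨hxT, hxD⟩)]
    have hAT : T \ insert x D ⊆ T.erase x := by
      rw [sdiff_insert]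
      exact erase_subset_erase x sdiff_subset
    have hlower : f T - f (T.erase x) ≤ f (T \ D) - f (T \ insert x D) := by
      simpa only [insert_erase hxT, hA] using
        sub_le_sub_insert_of_submodular hf hAT (notMem_erase x T)
    have hupper : f (T \ D) ≤ f (T \ insert x D) + 1 := hA ▸ hstep _ x hxA
    rw [card_insert_of_notMem hxD]
    push_cast
    linarith [htop x hxT]

end Finset

section CubeVertices

variable {ι : Type*} [DecidableEq ι]

theorem add_sum_single_inf (ℓ : ι → ℕ) (I J : Finset ι) :
    (ℓ + ∑ i ∈ I, Pi.single i 1) ⊓ (ℓ + ∑ i ∈ J, Pi.single i 1) =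
      ℓ + ∑ i ∈ I ∩ J, Pi.single i 1 := by
  funext j
  simp only [Pi.inf_apply, Pi.add_apply, Finset.sum_apply, Pi.single_apply,
    Finset.sum_ite_eq, Finset.mem_inter]
  by_cases hI : j ∈ I <;> by_cases hJ : j ∈ J <;> simp [hI, hJ]

theorem add_sum_single_sup (ℓ : ι → ℕ) (I J : Finset ι) :
    (ℓ + ∑ i ∈ I, Pi.single i 1) ⊔ (ℓ + ∑ i ∈ J, Pi.single i 1) =
      ℓ + ∑ i ∈ I ∪ J, Pi.single i 1 := by
  funext j
  simp only [Pi.sup_apply, Pi.add_apply, Finset.sum_apply, Pi.single_apply,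
    Finset.sum_ite_eq, Finset.mem_union]
  by_cases hI : j ∈ I <;> by_cases hJ : j ∈ J <;> simp [hI, hJ]

theorem add_sum_single_insert (ℓ : ι → ℕ) {A : Finset ι} {x : ι} (hx : x ∉ A) :
    ℓ + ∑ i ∈ insert x A, Pi.single i 1 = (ℓ + ∑ i ∈ A, Pi.single i 1) + Pi.single x 1 := by
  rw [Finset.sum_insert hx]
  abel

end CubeVertices

theorem weight_pattern_on_cube_general
    (r : ℕ)
    (w0 : (Fin r → ℕ) → ℤ)
    (hstep : ∀ (ℓ : Fin r → ℕ) (i : Fin r), |w0 (ℓ + Pi.single i 1) - w0 ℓ| = 1)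
    (hsub : ∀ ℓ ℓ' : Fin r → ℕ, w0 (ℓ ⊓ ℓ') + w0 (ℓ ⊔ ℓ') ≤ w0 ℓ + w0 ℓ')
    (ℓ : Fin r → ℕ) (n : ℤ) (k : ℕ)
    (T : Finset (Fin r)) (hT : T.card = k + 1)
    (hlow : ∀ I ⊆ T, I ≠ T → w0 (ℓ + ∑ i ∈ I, Pi.single i 1) ≤ n)
    (htop : w0 (ℓ + ∑ i ∈ T, Pi.single i 1) = n + 1) :
    ∀ I ⊆ T, w0 (ℓ + ∑ i ∈ I, Pi.single i 1) = n - (k : ℤ) + (I.card : ℤ) := by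
  set f : Finset (Fin r) → ℤ := fun I => w0 (ℓ + ∑ i ∈ I, Pi.single i 1) with hf
  have hf_sub : ∀ A B, f (A ∩ B) + f (A ∪ B) ≤ f A + f B := fun A B => by
    have h := hsub (ℓ + ∑ i ∈ A, Pi.single i 1) (ℓ + ∑ i ∈ B, Pi.single i 1)
    rwa [add_sum_single_inf, add_sum_single_sup] at h
  have hf_step : ∀ A, ∀ x ∉ A, f (insert x A) ≤ f A + 1 := fun A x hx => by
    have h := (le_abs_self _).trans (hstep (ℓ + ∑ i ∈ A, Pi.single i 1) x).le
    simp only [hf, add_sum_single_insert ℓ hx]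
    linarith
  have hf_top : ∀ x ∈ T, f (T.erase x) + 1 ≤ f T := fun x hx => by
    have h := hlow (T.erase x) (Finset.erase_subset x T) (Finset.erase_ne_self.mpr hx)
    simp only [hf, htop]
    linarith
  intro I hIT
  have hI := Finset.eq_sub_card_sdiff_of_submodular hf_sub hf_step hf_top I hIT
  have hcard : I.card ≤ k + 1 := hT ▸ Finset.card_le_card hIT
  simp only [hf, htop, Finset.card_sdiff_of_subset hIT, hT] at hI
  rw [hI]
  push_cast [hcard]
  ring

/-- weight pattern on a `(k+1)`-cube rooted at `ℓ`: if every proper lower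
face vertex has weight ≤ n and the top vertex has weight `n + 1`, then the vertex
indexed by `I ⊆ T` has weight exactly `n - k + |I|`. -/
theorem weight_pattern_on_cube
    (r : ℕ) (hr : 1 ≤ r)
    (w0 : (Fin r → ℕ) → ℤ)
    (hstep : ∀ (ℓ : Fin r → ℕ) (i : Fin r), |w0 (ℓ + Pi.single i 1) - w0 ℓ| = 1)
    (hsub : ∀ ℓ ℓ' : Fin r → ℕ, w0 (ℓ ⊓ ℓ') + w0 (ℓ ⊔ ℓ') ≤ w0 ℓ + w0 ℓ')
    (ℓ : Fin r → ℕ) (n : ℤ) (k : ℕ)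
    (T : Finset (Fin r)) (hT : T.card = k + 1)
    (hlow : ∀ I ⊆ T, I ≠ T → w0 (ℓ + ∑ i ∈ I, Pi.single i 1) ≤ n)
    (htop : w0 (ℓ + ∑ i ∈ T, Pi.single i 1) = n + 1) :
    ∀ I ⊆ T, w0 (ℓ + ∑ i ∈ I, Pi.single i 1) = n - (k : ℤ) + (I.card : ℤ) :=
  weight_pattern_on_cube_general r w0 hstep hsub ℓ n k T hT hlow htop
end

section
/- Suppose, in addition to the standing combinatorial setup, that c ∈ ℕ^r satisfies c + ℕ^r ⊆ S (c is a conductor for S). Then: (1) for every ℓ ∈ ℕ^r and every 1 ≤ i ≤ r with ℓ_i ≥ c_i one has w_0(ℓ + e^i) = w_0(ℓ) + 1; and (2) for every ℓ ∈ ℕ^r, w_0(ℓ) ≥ w_0(min(ℓ, c)), where min is taken coordinatewise. In particular, the infimum of w_0 over ℕ^r is attained on the rectangle {ℓ ∈ ℕ^r : ℓ ≤ c}. -/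
/-- if `c + ℕ^r ⊆ S`, then (1) the weight strictly increases in the
`i`-th direction whenever `ℓᵢ ≥ cᵢ`, and (2) `w₀(ℓ) ≥ w₀(min(ℓ, c))` for all `ℓ`. -/
theorem weight_above_conductor
    (r : ℕ) (hr : 1 ≤ r)
    (S : AddSubmonoid (Fin r → ℕ))
    (h : (Fin r → ℕ) → ℕ)
    (h0 : h 0 = 0)
    (hstep_pos : ∀ (ℓ : Fin r → ℕ) (i : Fin r),
      (∃ s ∈ S, s i = ℓ i ∧ ∀ j, j ≠ i → ℓ j ≤ s j) →
        h (ℓ + Pi.single i 1) = h ℓ + 1)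
    (hstep_neg : ∀ (ℓ : Fin r → ℕ) (i : Fin r),
      ¬ (∃ s ∈ S, s i = ℓ i ∧ ∀ j, j ≠ i → ℓ j ≤ s j) →
        h (ℓ + Pi.single i 1) = h ℓ)
    (w0 : (Fin r → ℕ) → ℤ)
    (hw0 : ∀ ℓ, w0 ℓ = 2 * (h ℓ : ℤ) - ∑ i, (ℓ i : ℤ))
    (c : Fin r → ℕ) (hc : ∀ ℓ : Fin r → ℕ, c ≤ ℓ → ℓ ∈ S) :
    (∀ (ℓ : Fin r → ℕ) (i : Fin r), c i ≤ ℓ i →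
      w0 (ℓ + Pi.single i 1) = w0 ℓ + 1) ∧
    (∀ ℓ : Fin r → ℕ, w0 (ℓ ⊓ c) ≤ w0 ℓ) := by
  have key : ∀ (ℓ : Fin r → ℕ) (i : Fin r), c i ≤ ℓ i →
      w0 (ℓ + Pi.single i 1) = w0 ℓ + 1 := by
    intro ℓ i hci
    have hΔ : ∃ s ∈ S, s i = ℓ i ∧ ∀ j, j ≠ i → ℓ j ≤ s j := by
      refine ⟨fun j => if j = i then ℓ i else max (ℓ j) (c j), ?_, by simp, ?_⟩
      · apply hc
        intro j
        by_cases hj : j = i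
        · subst hj; simpa using hci
        · simp [hj, le_max_right]
      · intro j hj
        simp [hj, le_max_left]
    have hh := hstep_pos ℓ i hΔ
    have hsum : ∑ j, ((ℓ + Pi.single i 1 : Fin r → ℕ) j : ℤ) = (∑ j, (ℓ j : ℤ)) + 1 := by
      have : ∀ j, (((ℓ + Pi.single i 1 : Fin r → ℕ)) j : ℤ) = (ℓ j : ℤ) + ((Pi.single i 1 : Fin r → ℕ) j : ℤ) := by
        intro j; simp [Pi.add_apply]
      rw [Finset.sum_congr rfl fun j _ => this j, Finset.sum_add_distrib]
      congr 1
      simp [Pi.single_apply]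
    rw [hw0, hw0, hh, hsum]
    push_cast
    ring
  refine ⟨key, ?_⟩
  have main : ∀ n (ℓ : Fin r → ℕ), ∑ i, ℓ i ≤ n → w0 (ℓ ⊓ c) ≤ w0 ℓ := by
    intro n
    induction n with
    | zero =>
      intro ℓ hℓ
      have : ℓ = 0 := by
        funext j
        have := Finset.sum_eq_zero_iff.mp (Nat.le_zero.mp hℓ) j (Finset.mem_univ j)
        simpa using this
      subst this
      have : (0 : Fin r → ℕ) ⊓ c = 0 := by
        funext j; simp
      rw [this]
    | succ n ih =>
      intro ℓ hℓ
      by_cases hle : ℓ ≤ c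
      · rw [inf_eq_left.mpr hle]
      · rw [Pi.le_def] at hle
        push_neg at hle
        obtain ⟨i, hi⟩ := hle
        set ℓ' : Fin r → ℕ := Function.update ℓ i (ℓ i - 1) with hℓ'
        have hdec : ℓ = ℓ' + Pi.single i 1 := by
          funext j
          by_cases hj : j = i
          · subst hj
            simp [hℓ', Function.update_self]
            omega
          · simp [hℓ', Function.update_of_ne hj, Pi.single_apply, hj]
        have hci' : c i ≤ ℓ' i := by
          simp [hℓ', Function.update_self]; omega
        have hstep : w0 ℓ = w0 ℓ' + 1 := by
          rw [hdec]; exact key ℓ' i hci'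
        have hinf : ℓ' ⊓ c = ℓ ⊓ c := by
          funext j
          by_cases hj : j = i
          · subst hj
            simp [hℓ', Function.update_self, Pi.inf_apply]
            omega
          · simp [hℓ', Function.update_of_ne hj, Pi.inf_apply]
        have hsum' : ∑ j, ℓ' j ≤ n := by
          have h1 : ∑ j, ℓ' j = (ℓ i - 1) + ∑ j ∈ Finset.univ \ {i}, ℓ j := by
            rw [hℓ', Finset.sum_update_of_mem (Finset.mem_univ i)]
          have h2 : ∑ j, ℓ j = ∑ j ∈ Finset.univ \ {i}, ℓ j + ℓ i :=
            Finset.sum_eq_sum_sdiff_singleton_add (Finset.mem_univ i) ℓ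
          omega
        calc w0 (ℓ ⊓ c) = w0 (ℓ' ⊓ c) := by rw [hinf]
          _ ≤ w0 ℓ' := ih ℓ' hsum'
          _ ≤ w0 ℓ := by omega
  intro ℓ
  exact main (∑ i, ℓ i) ℓ le_rfl
end

section
/- Suppose, in addition to the standing combinatorial setup, that r ≥ 2, |m| = 3, and w_0(2m) = −2. Then w_0(m + e) = 1 − r, where e := e^1 + ⋯ + e^r = (1, …, 1). -/
/-- Auxiliary lemma for the `r = 2` case: if `m i = 1`, `m j = 2` and
`h (m + m) = 2`, then `h (m + 1) = 2`. -/
lemma weight_m_plus_e_eq_aux {r : ℕ} (S : AddSubmonoid (Fin r → ℕ))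
    (h : (Fin r → ℕ) → ℕ) (h0 : h 0 = 0)
    (hstep_pos : ∀ (ℓ : Fin r → ℕ) (i : Fin r),
      (∃ s ∈ S, s i = ℓ i ∧ ∀ j, j ≠ i → ℓ j ≤ s j) →
        h (ℓ + Pi.single i 1) = h ℓ + 1)
    (hstep_neg : ∀ (ℓ : Fin r → ℕ) (i : Fin r),
      ¬ (∃ s ∈ S, s i = ℓ i ∧ ∀ j, j ≠ i → ℓ j ≤ s j) →
        h (ℓ + Pi.single i 1) = h ℓ)
    (m : Fin r → ℕ) (hmS : m ∈ S)
    (i j : Fin r) (hij : i ≠ j) (hK : ∀ k, k = i ∨ k = j)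
    (hmi : m i = 1) (hmj : m j = 2)
    (h2m : h (m + m) = 2) : h (m + 1) = 2 := by
  have mono : ∀ (ℓ : Fin r → ℕ) (k : Fin r), h ℓ ≤ h (ℓ + Pi.single k 1) := by
    intro ℓ k
    by_cases hc : ∃ s ∈ S, s k = ℓ k ∧ ∀ j, j ≠ k → ℓ j ≤ s j
    · rw [hstep_pos ℓ k hc]; omega
    · rw [hstep_neg ℓ k hc]
  have h1 : h (Pi.single i 1) = 1 := by
    have := hstep_pos 0 i ⟨0, S.zero_mem, rfl, fun _ _ => le_rfl⟩
    simpa [h0] using this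
  have h2 : h (Pi.single i 1 + Pi.single i 1) = 2 := by
    have hw : ∃ s ∈ S, s i = (Pi.single i 1 : Fin r → ℕ) i ∧
        ∀ k, k ≠ i → (Pi.single i 1 : Fin r → ℕ) k ≤ s k := by
      refine ⟨m, hmS, ?_, ?_⟩
      · simp [hmi]
      · intro k hk; simp [Pi.single_eq_of_ne hk]
    rw [hstep_pos _ i hw, h1]
  have key : m + 1 = ((Pi.single i 1 + Pi.single i 1) + Pi.single j 1)
      + Pi.single j 1 + Pi.single j 1 := by
    funext k
    rcases hK k with hk | hk <;> subst hk <;>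
      simp [Pi.single_eq_same, Pi.single_eq_of_ne hij, Pi.single_eq_of_ne hij.symm,
        hmi, hmj]
  have hup : h (m + 1) ≤ 2 := by
    have e2 : (m + 1) + Pi.single j 1 = m + m := by
      funext k
      rcases hK k with hk | hk <;> subst hk <;>
        simp [Pi.single_eq_same, Pi.single_eq_of_ne hij, Pi.single_eq_of_ne hij.symm,
          hmi, hmj]
    have := mono (m + 1) j
    rwa [e2, h2m] at this
  have hlow : 2 ≤ h (m + 1) := by
    rw [key]
    have s1 := mono (Pi.single i 1 + Pi.single i 1) j
    have s2 := mono ((Pi.single i 1 + Pi.single i 1) + Pi.single j 1) j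
    have s3 := mono (((Pi.single i 1 + Pi.single i 1) + Pi.single j 1) + Pi.single j 1) j
    omega
  omega

/-- if `r ≥ 2`, `|m| = 3` and `w₀(2m) = -2`, then
`w₀(m + e) = 1 - r` where `e = (1,…,1)`. -/
theorem weight_m_plus_e_eq
    (r : ℕ) (hr : 1 ≤ r)
    (S : AddSubmonoid (Fin r → ℕ))
    (h : (Fin r → ℕ) → ℕ)
    (h0 : h 0 = 0)
    (hstep_pos : ∀ (ℓ : Fin r → ℕ) (i : Fin r),
      (∃ s ∈ S, s i = ℓ i ∧ ∀ j, j ≠ i → ℓ j ≤ s j) →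
        h (ℓ + Pi.single i 1) = h ℓ + 1)
    (hstep_neg : ∀ (ℓ : Fin r → ℕ) (i : Fin r),
      ¬ (∃ s ∈ S, s i = ℓ i ∧ ∀ j, j ≠ i → ℓ j ≤ s j) →
        h (ℓ + Pi.single i 1) = h ℓ)
    (w0 : (Fin r → ℕ) → ℤ)
    (hw0 : ∀ ℓ, w0 ℓ = 2 * (h ℓ : ℤ) - ∑ i, (ℓ i : ℤ))
    (m : Fin r → ℕ) (hm : ∀ i, 1 ≤ m i) (hmS : m ∈ S)
    (hSm : ∀ s ∈ S, s ≠ 0 → m ≤ s)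
    (hr2 : 2 ≤ r)
    (hm3 : (∑ i, m i) = 3)
    (h2m : w0 (m + m) = -2) :
    w0 (m + 1) = 1 - (r : ℤ) := by
  have hr3 : r ≤ 3 := by
    have h4 : ∑ _i : Fin r, 1 ≤ ∑ i, m i := Finset.sum_le_sum fun i _ => hm i
    simp [hm3] at h4
    omega
  obtain rfl | rfl : r = 2 ∨ r = 3 := by omega
  · -- r = 2
    have hK : ∀ k : Fin 2, k = 0 ∨ k = 1 := by decide
    have hsum2 : m 0 + m 1 = 3 := by simpa [Fin.sum_univ_two] using hm3
    have hh2m : h (m + m) = 2 := by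
      have hw := hw0 (m + m)
      rw [h2m] at hw
      rw [Fin.sum_univ_two] at hw
      simp only [Pi.add_apply] at hw
      push_cast at hw
      omega
    have hcases : (m 0 = 1 ∧ m 1 = 2) ∨ (m 0 = 2 ∧ m 1 = 1) := by
      have := hm 0; have := hm 1; omega
    have hfin : h (m + 1) = 2 := by
      rcases hcases with ⟨h01, h02⟩ | ⟨h01, h02⟩
      · exact weight_m_plus_e_eq_aux S h h0 hstep_pos hstep_neg m hmS 0 1
          (by decide) hK h01 h02 hh2m
      · exact weight_m_plus_e_eq_aux S h h0 hstep_pos hstep_neg m hmS 1 0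
          (by decide) (fun k => (hK k).symm) h02 h01 hh2m
    rw [hw0, hfin, Fin.sum_univ_two]
    simp only [Pi.add_apply, Pi.one_apply]
    push_cast
    omega
  · -- r = 3
    have h3 : m 0 + m 1 + m 2 = 3 := by simpa [Fin.sum_univ_three] using hm3
    have hm1 : ∀ k : Fin 3, m k = 1 := by
      intro k
      have := hm 0; have := hm 1; have := hm 2
      fin_cases k <;>
        first
        | (show m 0 = 1; omega)
        | (show m 1 = 1; omega)
        | (show m 2 = 1; omega)
    have hme : m + 1 = m + m := by
      funext k
      simp [Pi.add_apply, hm1 k]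
    rw [hme, h2m]
    norm_num
end

section
/- Suppose, in addition to the standing combinatorial setup, that w_0 is submodular (w_0(ℓ) + w_0(ℓ') ≥ w_0(min(ℓ,ℓ')) + w_0(max(ℓ,ℓ')) for all ℓ, ℓ', with coordinatewise min and max), that |m| = 4, and that there are pairwise distinct indices i, j, k ∈ {1, …, r} with w_0(m + e^i + e^j) = −2 and w_0(m + e^j + e^k) = −2. Then w_0(m + e^i + e^j + e^k) ≤ −3. -/
/-!
The Hilbert function grows by steps of 0 or 1, so it is monotone and `h m ≥ h eˣ = 1` for any `x`
in the support of `m`. Since `m ∈ Δ̄_j(m)`, `h (m + eʲ) = h m + 1 ≥ 2`, i.e. `w₀ (m + eʲ) ≥ -1`.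
The vectors `m + eʲ` and `m + eⁱ + eʲ + eᵏ` are the meet and the join of `m + eⁱ + eʲ` and
`m + eʲ + eᵏ`, so submodularity gives `w₀ (m + eⁱ + eʲ + eᵏ) ≤ -2 - 2 + 1 = -3`.
-/

open Finset

section

variable {ι : Type*} [DecidableEq ι]

theorem monotone_of_le_add_single [Finite ι] {α : Type*} [Preorder α] {f : (ι → ℕ) → α}
    (hf : ∀ ℓ i, f ℓ ≤ f (ℓ + Pi.single i 1)) : Monotone f := by
  have key : ∀ d ℓ, f ℓ ≤ f (ℓ + d) := by
    intro d
    induction d using Pi.single_induction with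
    | zero => simp
    | add d e hd he => exact fun ℓ => (hd ℓ).trans (add_assoc ℓ d e ▸ he (ℓ + d))
    | single i n =>
      induction n with
      | zero => simp
      | succ n ih =>
        intro ℓ
        rw [Pi.single_add, ← add_assoc]
        exact (ih ℓ).trans (hf _ i)
  intro ℓ ℓ' hle
  simpa [add_tsub_cancel_of_le hle] using key (ℓ' - ℓ) ℓ

theorem add_single_inf_add_single {i k : ι} (hik : i ≠ k) (ℓ : ι → ℕ) (a b : ℕ) :
    (ℓ + Pi.single i a) ⊓ (ℓ + Pi.single k b) = ℓ := by
  ext x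
  rcases eq_or_ne x i with rfl | hxi
  · simp [hik]
  · simp [hxi]

theorem add_single_sup_add_single {i k : ι} (hik : i ≠ k) (ℓ : ι → ℕ) (a b : ℕ) :
    (ℓ + Pi.single i a) ⊔ (ℓ + Pi.single k b) = ℓ + Pi.single i a + Pi.single k b := by
  ext x
  rcases eq_or_ne x i with rfl | hxi
  · simp [hik]
  · simp [hxi]

end

theorem weight_triple_cube_bound_general
    (r : ℕ)
    (S : AddSubmonoid (Fin r → ℕ))
    (h : (Fin r → ℕ) → ℕ)
    (h0 : h 0 = 0)
    (hstep_pos : ∀ (ℓ : Fin r → ℕ) (i : Fin r),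
      (∃ s ∈ S, s i = ℓ i ∧ ∀ j, j ≠ i → ℓ j ≤ s j) →
        h (ℓ + Pi.single i 1) = h ℓ + 1)
    (hstep_neg : ∀ (ℓ : Fin r → ℕ) (i : Fin r),
      ¬ (∃ s ∈ S, s i = ℓ i ∧ ∀ j, j ≠ i → ℓ j ≤ s j) →
        h (ℓ + Pi.single i 1) = h ℓ)
    (w0 : (Fin r → ℕ) → ℤ)
    (hw0 : ∀ ℓ, w0 ℓ = 2 * (h ℓ : ℤ) - ∑ i, (ℓ i : ℤ))
    (m : Fin r → ℕ) (hmS : m ∈ S)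
    (hsub : ∀ ℓ ℓ' : Fin r → ℕ, w0 (ℓ ⊓ ℓ') + w0 (ℓ ⊔ ℓ') ≤ w0 ℓ + w0 ℓ')
    (hm4 : (∑ i, m i) = 4)
    (i j k : Fin r) (hik : i ≠ k)
    (h1 : w0 (m + Pi.single i 1 + Pi.single j 1) = -2)
    (h2 : w0 (m + Pi.single j 1 + Pi.single k 1) = -2) :
    w0 (m + Pi.single i 1 + Pi.single j 1 + Pi.single k 1) ≤ -3 := by
  have hmono : Monotone h := monotone_of_le_add_single fun ℓ i => by
    by_cases hΔ : ∃ s ∈ S, s i = ℓ i ∧ ∀ j, j ≠ i → ℓ j ≤ s j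
    · simp [hstep_pos ℓ i hΔ]
    · simp [hstep_neg ℓ i hΔ]
  have hΔ_self : ∀ s ∈ S, ∀ x, ∃ t ∈ S, t x = s x ∧ ∀ y, y ≠ x → s y ≤ t y :=
    fun s hs _ => ⟨s, hs, rfl, fun _ _ => le_rfl⟩
  obtain ⟨x, -, hx⟩ := exists_ne_zero_of_sum_ne_zero (hm4.trans_ne four_ne_zero)
  have hhm : 1 ≤ h m := calc
    1 = h (0 + Pi.single x 1) := by rw [hstep_pos 0 x (hΔ_self 0 S.zero_mem x), h0]
    _ ≤ h m := hmono fun y => by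
      rcases eq_or_ne y x with rfl | hy <;> simp [*, Nat.one_le_iff_ne_zero]
  have hwmj : -1 ≤ w0 (m + Pi.single j 1) := by
    have hsum : ∑ y, ((m + Pi.single j 1 : Fin r → ℕ) y : ℤ) = 5 := by
      rw [← Nat.cast_sum]
      simp [sum_add_distrib, hm4]
    rw [hw0, hsum, hstep_pos m j (hΔ_self m hmS j)]
    omega
  have hcube := hsub (m + Pi.single j 1 + Pi.single i 1) (m + Pi.single j 1 + Pi.single k 1)
  rw [add_single_inf_add_single hik, add_single_sup_add_single hik] at hcube
  rw [add_right_comm m (Pi.single i 1)] at h1 ⊢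
  omega

/-- if `w₀` is submodular, `|m| = 4`, and there are pairwise distinct
indices `i j k` with `w₀(m + eⁱ + eʲ) = -2 = w₀(m + eʲ + eᵏ)`, then
`w₀(m + eⁱ + eʲ + eᵏ) ≤ -3`. -/
theorem weight_triple_cube_bound
    (r : ℕ) (hr : 1 ≤ r)
    (S : AddSubmonoid (Fin r → ℕ))
    (h : (Fin r → ℕ) → ℕ)
    (h0 : h 0 = 0)
    (hstep_pos : ∀ (ℓ : Fin r → ℕ) (i : Fin r),
      (∃ s ∈ S, s i = ℓ i ∧ ∀ j, j ≠ i → ℓ j ≤ s j) →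
        h (ℓ + Pi.single i 1) = h ℓ + 1)
    (hstep_neg : ∀ (ℓ : Fin r → ℕ) (i : Fin r),
      ¬ (∃ s ∈ S, s i = ℓ i ∧ ∀ j, j ≠ i → ℓ j ≤ s j) →
        h (ℓ + Pi.single i 1) = h ℓ)
    (w0 : (Fin r → ℕ) → ℤ)
    (hw0 : ∀ ℓ, w0 ℓ = 2 * (h ℓ : ℤ) - ∑ i, (ℓ i : ℤ))
    (m : Fin r → ℕ) (hm : ∀ i, 1 ≤ m i) (hmS : m ∈ S)
    (hSm : ∀ s ∈ S, s ≠ 0 → m ≤ s)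
    (hsub : ∀ ℓ ℓ' : Fin r → ℕ, w0 (ℓ ⊓ ℓ') + w0 (ℓ ⊔ ℓ') ≤ w0 ℓ + w0 ℓ')
    (hm4 : (∑ i, m i) = 4)
    (i j k : Fin r) (hij : i ≠ j) (hjk : j ≠ k) (hik : i ≠ k)
    (h1 : w0 (m + Pi.single i 1 + Pi.single j 1) = -2)
    (h2 : w0 (m + Pi.single j 1 + Pi.single k 1) = -2) :
    w0 (m + Pi.single i 1 + Pi.single j 1 + Pi.single k 1) ≤ -3 :=
  weight_triple_cube_bound_general r S h h0 hstep_pos hstep_neg w0 hw0 m hmS hsub hm4 i j k hik h1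
    h2
end

section
/- For ℓ ∈ ℕ^r define the polynomial 𝔭_ℓ(q) := Σ_{∅ ≠ J ⊆ {1,…,r}} (−1)^{|J|+1} (q^{h(ℓ)} + q^{h(ℓ)+1} + ⋯ + q^{h(ℓ+e^J)−1}) ∈ ℤ[q], where e^J := Σ_{j∈J} e^j and the inner sum is empty when h(ℓ + e^J) = h(ℓ); this is the coefficient of t^ℓ in the multivariable motivic Poincaré series, since (q^{h(ℓ+e^J)} − q^{h(ℓ)})/(1−q) = −(q^{h(ℓ)} + ⋯ + q^{h(ℓ+e^J)−1}). If ℓ ∈ S, then the coefficient of q^{h(ℓ)} in 𝔭_ℓ(q) equals 1, and the coefficient of q^d in 𝔭_ℓ(q) equals 0 for every d < h(ℓ); in particular 𝔭_ℓ ≠ 0 and its order (lowest degree with nonzero coefficient) equals h(ℓ). (This shows the motivic Poincaré series determines the Hilbert function.) -/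
/-- for `ℓ ∈ S`, the coefficient polynomial
`𝔭_ℓ(q) = Σ_{∅ ≠ J} (-1)^{|J|+1} (q^{h(ℓ)} + ⋯ + q^{h(ℓ+e^J)-1})` of the motivic
Poincaré series has coefficient `1` in degree `h(ℓ)` and coefficient `0` in every
degree `d < h(ℓ)`. -/
theorem motivic_coefficient_order
    (r : ℕ) (hr : 1 ≤ r)
    (S : AddSubmonoid (Fin r → ℕ))
    (h : (Fin r → ℕ) → ℕ)
    (h0 : h 0 = 0)
    (hstep_pos : ∀ (ℓ : Fin r → ℕ) (i : Fin r),
      (∃ s ∈ S, s i = ℓ i ∧ ∀ j, j ≠ i → ℓ j ≤ s j) →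
        h (ℓ + Pi.single i 1) = h ℓ + 1)
    (hstep_neg : ∀ (ℓ : Fin r → ℕ) (i : Fin r),
      ¬ (∃ s ∈ S, s i = ℓ i ∧ ∀ j, j ≠ i → ℓ j ≤ s j) →
        h (ℓ + Pi.single i 1) = h ℓ)
    (w0 : (Fin r → ℕ) → ℤ)
    (hw0 : ∀ ℓ, w0 ℓ = 2 * (h ℓ : ℤ) - ∑ i, (ℓ i : ℤ))
    (ℓ : Fin r → ℕ) (hℓ : ℓ ∈ S) :
    ∀ p : Polynomial ℤ,
      p = ∑ J ∈ (Finset.univ.powerset.erase (∅ : Finset (Fin r))),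
            (-1 : Polynomial ℤ) ^ (J.card + 1) *
              ∑ d ∈ Finset.Ico (h ℓ) (h (ℓ + ∑ j ∈ J, Pi.single j 1)),
                (Polynomial.X : Polynomial ℤ) ^ d →
      p.coeff (h ℓ) = 1 ∧ ∀ d : ℕ, d < h ℓ → p.coeff d = 0 := by
  classical
  -- h is nondecreasing under adding a single basis vector
  have mono1 : ∀ (m : Fin r → ℕ) (i : Fin r), h m ≤ h (m + Pi.single i 1) := by
    intro m i
    by_cases hc : ∃ s ∈ S, s i = m i ∧ ∀ j, j ≠ i → m j ≤ s j
    · rw [hstep_pos m i hc]; omega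
    · rw [hstep_neg m i hc]
  -- h is nondecreasing under adding sums of basis vectors
  have monoJ : ∀ (J : Finset (Fin r)) (m : Fin r → ℕ),
      h m ≤ h (m + ∑ j ∈ J, Pi.single j 1) := by
    intro J
    induction J using Finset.induction_on with
    | empty => intro m; simp
    | @insert a s hj ih =>
      intro m
      rw [Finset.sum_insert hj]
      have : m + (Pi.single a 1 + ∑ j ∈ s, Pi.single j 1)
          = (m + ∑ j ∈ s, Pi.single j 1) + Pi.single a 1 := by
        ring
      rw [this]
      exact le_trans (ih m) (mono1 _ a)
  -- for nonempty J, h (ℓ + e^J) > h ℓ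
  have key : ∀ J : Finset (Fin r), J.Nonempty →
      h ℓ < h (ℓ + ∑ j ∈ J, Pi.single j 1) := by
    intro J ⟨i, hi⟩
    have hstep : h (ℓ + Pi.single i 1) = h ℓ + 1 :=
      hstep_pos ℓ i ⟨ℓ, hℓ, rfl, fun j _ => le_refl _⟩
    have hsplit : ℓ + ∑ j ∈ J, Pi.single j 1
        = (ℓ + Pi.single i 1) + ∑ j ∈ J.erase i, Pi.single j 1 := by
      rw [← Finset.add_sum_erase _ _ hi]; ring
    calc h ℓ < h (ℓ + Pi.single i 1) := by omega
      _ ≤ h ((ℓ + Pi.single i 1) + ∑ j ∈ J.erase i, Pi.single j 1) := monoJ _ _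
      _ = h (ℓ + ∑ j ∈ J, Pi.single j 1) := by rw [hsplit]
  intro p hp
  -- coefficient formula
  have coeff_eq : ∀ d : ℕ, p.coeff d =
      ∑ J ∈ (Finset.univ.powerset.erase (∅ : Finset (Fin r))),
        (-1 : ℤ) ^ (J.card + 1) *
          (if d ∈ Finset.Ico (h ℓ) (h (ℓ + ∑ j ∈ J, Pi.single j 1)) then 1 else 0) := by
    intro d
    rw [hp, Polynomial.finset_sum_coeff]
    refine Finset.sum_congr rfl fun J _ => ?_
    have : ((-1 : Polynomial ℤ) ^ (J.card + 1)) = Polynomial.C ((-1 : ℤ) ^ (J.card + 1)) := by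
      simp
    rw [this, Polynomial.coeff_C_mul, Polynomial.finset_sum_coeff]
    congr 1
    simp only [Polynomial.coeff_X_pow]
    rw [Finset.sum_ite_eq]
  constructor
  · rw [coeff_eq]
    have : ∀ J ∈ (Finset.univ.powerset.erase (∅ : Finset (Fin r))),
        (-1 : ℤ) ^ (J.card + 1) *
          (if h ℓ ∈ Finset.Ico (h ℓ) (h (ℓ + ∑ j ∈ J, Pi.single j 1)) then 1 else 0)
        = (-1 : ℤ) ^ (J.card + 1) := by
      intro J hJ
      have hJne : J.Nonempty := Finset.nonempty_iff_ne_empty.2 (Finset.mem_erase.1 hJ).1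
      rw [if_pos (Finset.mem_Ico.2 ⟨le_refl _, key J hJne⟩), mul_one]
    rw [Finset.sum_congr rfl this]
    -- alternating sum over nonempty subsets
    have hne : (Finset.univ : Finset (Fin r)).Nonempty :=
      ⟨⟨0, hr⟩, Finset.mem_univ _⟩
    have htotal : ∑ J ∈ (Finset.univ : Finset (Fin r)).powerset, (-1 : ℤ) ^ J.card = 0 :=
      Finset.sum_powerset_neg_one_pow_card_of_nonempty hne
    have hmem : (∅ : Finset (Fin r)) ∈ (Finset.univ : Finset (Fin r)).powerset := by simp
    have := Finset.add_sum_erase _ (fun J : Finset (Fin r) => (-1 : ℤ) ^ J.card) hmem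
    rw [htotal] at this
    simp only [Finset.card_empty, pow_zero] at this
    have hrest : ∑ J ∈ (Finset.univ.powerset.erase (∅ : Finset (Fin r))),
        (-1 : ℤ) ^ J.card = -1 := by omega
    calc ∑ J ∈ (Finset.univ.powerset.erase (∅ : Finset (Fin r))), (-1 : ℤ) ^ (J.card + 1)
        = ∑ J ∈ (Finset.univ.powerset.erase (∅ : Finset (Fin r))),
            (-1) * (-1 : ℤ) ^ J.card := by
          refine Finset.sum_congr rfl fun J _ => ?_; ring
      _ = (-1) * ∑ J ∈ (Finset.univ.powerset.erase (∅ : Finset (Fin r))),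
            (-1 : ℤ) ^ J.card := by rw [Finset.mul_sum]
      _ = 1 := by rw [hrest]; ring
  · intro d hd
    rw [coeff_eq]
    refine Finset.sum_eq_zero fun J _ => ?_
    rw [if_neg, mul_zero]
    simp only [Finset.mem_Ico]
    omega
end

section
/- Let (O, 𝔪) be a commutative reduced local ring, let K be its total ring of fractions (the localization of O at the multiplicative set of nonzerodivisors), and let Ō be the integral closure of O in K; identify O and 𝔪 with their images in Ō under the canonical (injective) map. Let I be an ideal of Ō, and regard I, 𝔪·I, O and 𝔪 as O-submodules of Ō. Then, with lengths taken in ℕ∞, length_O((I + O)/(𝔪·I + 𝔪)) = length_O((I + O)/(𝔪·I + O)) + 1. Equivalently, for the O-subalgebra Õ := I + O of Ō one has length_O(Õ/𝔪Õ) = length_O((I + O)/(𝔪·I + O)) + 1. -/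
/-!
Inside `N = I + O`, the submodule `𝔪I + O` arises from `𝔪I + 𝔪` by adjoining `1`. Modulo
`𝔪I + 𝔪` the element `1` is killed by `𝔪`, and it is nonzero because `𝔪Ō ≠ Ō` by lying-over
for the integral extension `O ⊆ Ō`. Over a local ring this makes `𝔪I + 𝔪 ⊂ 𝔪I + O` a covering
with quotient `O/𝔪`, so additivity of length along `N/(𝔪I + 𝔪) ↠ N/(𝔪I + O)` gives the
extra `1`.
-/

/-- The length of an `R`-module `M`: the supremum of the lengths of strictly
increasing chains of submodules of `M`, valued in `ℕ∞`. -/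
noncomputable def moduleLength (R M : Type*) [Ring R] [AddCommGroup M] [Module R M] : ℕ∞ :=
  ⨆ p : LTSeries (Submodule R M), (p.length : ℕ∞)

open IsLocalRing Submodule

section Ring

variable {R M : Type*} [Ring R] [AddCommGroup M] [Module R M]

variable (R M) in
theorem moduleLength_eq_length : moduleLength R M = Module.length R M := by
  apply WithBot.coe_injective
  rw [Module.coe_length, Order.krullDim, moduleLength, WithBot.coe_iSup (OrderTop.bddAbove _)]
  rfl

theorem CovBy.length_quotient_eq_add_one {A B : Submodule R M} (h : A ⋖ B) :
    Module.length R (M ⧸ A) = Module.length R (M ⧸ B) + 1 := by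
  set T := B.map A.mkQ
  have hT : IsAtom T := by
    rw [← bot_covBy_iff, ← apply_covBy_apply_iff (comapMkQRelIso A),
      ← Set.OrdConnected.apply_covBy_apply_iff (OrderEmbedding.subtype _)
        (by rw [OrderEmbedding.coe_subtype, Subtype.range_coe]; exact Set.ordConnected_Ici)]
    simpa [T, comapMkQRelIso, h.le] using h
  rw [Module.length_eq_add_of_exact T.subtype T.mkQ T.injective_subtype T.mkQ_surjective
      (LinearMap.exact_subtype_mkQ T), (quotientQuotientEquivQuotient A B h.le).length_eq,
    Module.length_eq_one_iff.mpr (isSimpleModule_iff_isAtom.mpr hT), add_comm]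

theorem Submodule.comap_subtype_covBy_comap_subtype {p A B : Submodule R M} (h : A ⋖ B)
    (hB : B ≤ p) : comap p.subtype A ⋖ comap p.subtype B := by
  have hmapIic : ∀ X ≤ p, (mapIic p (comap p.subtype X) : Submodule R M) = X := fun X hX =>
    (map_comap_subtype p X).trans (inf_eq_right.mpr hX)
  rw [← apply_covBy_apply_iff (mapIic p),
    ← Set.OrdConnected.apply_covBy_apply_iff (OrderEmbedding.subtype _)
      (by rw [OrderEmbedding.coe_subtype, Subtype.range_coe]; exact Set.ordConnected_Iic)]
  simpa only [OrderEmbedding.coe_subtype, Function.comp_apply, hmapIic B hB,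
    hmapIic A (h.le.trans hB)] using h

end Ring

/-- An element of an intermediate submodule outside `A` has a unit coefficient on `x`. -/
theorem IsLocalRing.covBy_sup_span_singleton {R M : Type*} [CommRing R] [IsLocalRing R]
    [AddCommGroup M] [Module R M] {A : Submodule R M} {x : M} (hx : x ∉ A)
    (hmx : ∀ r ∈ maximalIdeal R, r • x ∈ A) : A ⋖ A ⊔ R ∙ x := by
  refine ⟨lt_of_le_of_ne le_sup_left fun h => hx (h ▸ mem_sup_right (mem_span_singleton_self x)),
    fun C hAC hCx => hCx.not_ge ?_⟩
  obtain ⟨y, hyC, hyA⟩ := SetLike.exists_of_lt hAC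
  obtain ⟨a, ha, _, hcx, rfl⟩ := mem_sup.mp (hCx.le hyC)
  obtain ⟨c, rfl⟩ := mem_span_singleton.mp hcx
  have hc : IsUnit c := by
    by_contra hc
    exact hyA (add_mem ha (hmx c hc))
  obtain ⟨u, rfl⟩ := hc
  have hxC : x ∈ C := by
    rw [C.add_mem_iff_right (hAC.le ha)] at hyC
    exact (C.smul_mem_iff' u).mp hyC
  exact sup_le hAC.le ((span_singleton_le_iff_mem x C).mpr hxC)

section IntegralExtension

variable {R S : Type*} [CommRing R] [IsLocalRing R] [CommRing S] [Algebra R S]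
  [Algebra.IsIntegral R S]

theorem IsLocalRing.one_notMem_maximalIdeal_smul_top
    (hinj : Function.Injective (algebraMap R S)) :
    (1 : S) ∉ maximalIdeal R • (⊤ : Submodule R S) := by
  rw [Ideal.smul_top_eq_map, restrictScalars_mem, ← Ideal.eq_top_iff_one,
    Ideal.map_eq_top_iff _ hinj (algebraMap_isIntegral_iff.mpr inferInstance)]
  exact (maximalIdeal.isMaximal R).ne_top

theorem IsLocalRing.sup_map_maximalIdeal_covBy_sup_range
    (hinj : Function.Injective (algebraMap R S)) {J : Submodule R S}
    (hJ : J ≤ maximalIdeal R • ⊤) :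
    J ⊔ map (Algebra.linearMap R S) (maximalIdeal R) ⋖
      J ⊔ LinearMap.range (Algebra.linearMap R S) := by
  have hrange : LinearMap.range (Algebra.linearMap R S) = R ∙ 1 := by
    ext
    simp [mem_span_singleton, Algebra.smul_def]
  have hmap_le : map (Algebra.linearMap R S) (maximalIdeal R) ≤ maximalIdeal R • ⊤ := by
    rintro _ ⟨r, hr, rfl⟩
    rw [Algebra.linearMap_apply, Algebra.algebraMap_eq_smul_one]
    exact smul_mem_smul hr mem_top
  rw [hrange, ← sup_eq_right.mpr (LinearMap.map_le_range.trans hrange.le), ← sup_assoc]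
  refine covBy_sup_span_singleton (fun h => one_notMem_maximalIdeal_smul_top hinj
    (sup_le hJ hmap_le h)) fun r hr => mem_sup_right ⟨r, hr, ?_⟩
  simp [Algebra.smul_def]

end IntegralExtension

theorem length_I_add_O_quotients_general
    (O : Type*) [CommRing O] [IsLocalRing O]
    (K : Type*) [CommRing K] [Algebra O K] [IsFractionRing O K]
    (I : Ideal ↥(integralClosure O K))
    (OA : Submodule O ↥(integralClosure O K))
    (hOA : OA = LinearMap.range (Algebra.linearMap O ↥(integralClosure O K)))
    (mI : Submodule O ↥(integralClosure O K))
    (hmI : mI = (IsLocalRing.maximalIdeal O) • (I.restrictScalars O))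
    (mO : Submodule O ↥(integralClosure O K))
    (hmO : mO = Submodule.map (Algebra.linearMap O ↥(integralClosure O K))
      (IsLocalRing.maximalIdeal O)) :
    moduleLength O
        (↥(I.restrictScalars O ⊔ OA) ⧸
          Submodule.comap (I.restrictScalars O ⊔ OA).subtype (mI ⊔ mO)) =
      moduleLength O
          (↥(I.restrictScalars O ⊔ OA) ⧸
            Submodule.comap (I.restrictScalars O ⊔ OA).subtype (mI ⊔ OA)) + 1 := by
  subst hOA hmI hmO
  have hinj : Function.Injective (algebraMap O (integralClosure O K)) :=
    fun a b h => IsFractionRing.injective O K (congrArg Subtype.val h)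
  have hcov := sup_map_maximalIdeal_covBy_sup_range hinj
    (smul_mono_right (maximalIdeal O) (le_top : I.restrictScalars O ≤ ⊤))
  rw [moduleLength_eq_length, moduleLength_eq_length]
  exact (comap_subtype_covBy_comap_subtype hcov
    (sup_le_sup_right smul_le_right _)).length_quotient_eq_add_one

/-- for a reduced local ring `(O, 𝔪)` with total ring of fractions `K`
and integral closure `Ō = integralClosure O K`, and an ideal `I` of `Ō`, one has
`length_O((I + O)/(𝔪I + 𝔪)) = length_O((I + O)/(𝔪I + O)) + 1` in `ℕ∞`. -/
theorem length_I_add_O_quotients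
    (O : Type*) [CommRing O] [IsLocalRing O] [IsReduced O]
    (K : Type*) [CommRing K] [Algebra O K] [IsFractionRing O K]
    (I : Ideal ↥(integralClosure O K))
    (OA : Submodule O ↥(integralClosure O K))
    (hOA : OA = LinearMap.range (Algebra.linearMap O ↥(integralClosure O K)))
    (mI : Submodule O ↥(integralClosure O K))
    (hmI : mI = (IsLocalRing.maximalIdeal O) • (I.restrictScalars O))
    (mO : Submodule O ↥(integralClosure O K))
    (hmO : mO = Submodule.map (Algebra.linearMap O ↥(integralClosure O K))
      (IsLocalRing.maximalIdeal O)) :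
    moduleLength O
        (↥(I.restrictScalars O ⊔ OA) ⧸
          Submodule.comap (I.restrictScalars O ⊔ OA).subtype (mI ⊔ mO)) =
      moduleLength O
          (↥(I.restrictScalars O ⊔ OA) ⧸
            Submodule.comap (I.restrictScalars O ⊔ OA).subtype (mI ⊔ OA)) + 1 :=
  length_I_add_O_quotients_general O K I OA hOA mI hmI mO hmO
end
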